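/- arXiv:1205.0202 — 13 statements merged into one kernel-verified Lean document; each statement's English description precedes it below -/
import Mathlib

section
/- Let A, B, C be groups and let ι_A : C → A and ι_B : C → B be injective group homomorphisms, and let A *_C B denote the corresponding amalgamated free product (the pushout of ι_A and ι_B in the category of groups). If the index of ι_A(C) in A is at least 3 (possibly infinite) and ι_B(C) is a proper subgroup of B, then A *_C B contains a non-abelian free subgroup; that is, there exists an injective group homomorphism from the free group of rank 2 into A *_C B. -/
/-- The two groups `A` and `B` packaged as a `Bool`-indexed family of types. -/
def CondGroup (A B : Type) (b : Bool) : Type := cond b A B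

instance {A B : Type} [Group A] [Group B] : ∀ b : Bool, Group (CondGroup A B b)
  | true => ‹Group A›
  | false => ‹Group B›

/-- The two homomorphisms `ι_A : C → A` and `ι_B : C → B` packaged as a
`Bool`-indexed family of homomorphisms, so that `Monoid.PushoutI (amalgMaps ιA ιB)`
is the amalgamated free product `A *_C B`, i.e. the pushout of `ι_A` and `ι_B`
in the category of groups. -/
def amalgMaps {A B C : Type} [Group A] [Group B] [Group C] (ιA : C →* A) (ιB : C →* B) :
    ∀ b : Bool, C →* CondGroup A B b
  | true => ιA
  | false => ιB

open Pointwise Monoid Monoid.PushoutI Monoid.PushoutI.NormalWord Monoid.CoprodI Function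

namespace AmalgAux

variable {ι : Type*} {G : ι → Type*} [∀ i, Group (G i)] {H : Type*} [Group H]
  {φ : ∀ i, H →* G i}

/-- Elements of the pushout represented by a reduced word whose first letter is
`⟨i, a⟩` with `a ∈ S`. -/
def startsWith (φ : ∀ i, H →* G i) (i : ι) (S : Set (G i)) : Set (PushoutI φ) :=
  {p | ∃ w : Word G, Reduced φ w ∧
    (∃ (a : G i) (t : List (Σ i, G i)), w.toList = ⟨i, a⟩ :: t ∧ a ∈ S) ∧
    ofCoprodI w.prod = p}

theorem startsWith_mono {i : ι} {S T : Set (G i)} (hST : S ⊆ T) :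
    startsWith φ i S ⊆ startsWith φ i T := by
  rintro p ⟨w, hred, ⟨a, t, hlist, haS⟩, hp⟩
  exact ⟨w, hred, ⟨a, t, hlist, hST haS⟩, hp⟩

theorem of_mem_startsWith {i : ι} {a : G i} (ha : a ∉ (φ i).range) {S : Set (G i)}
    (haS : a ∈ S) : of (φ := φ) i a ∈ startsWith φ i S := by
  have h1 : a ≠ 1 := fun h => ha (h ▸ (φ i).range.one_mem)
  have hne : Word.fstIdx (Word.empty : Word G) ≠ some i := by
    simp [Word.fstIdx, Word.empty]
  refine ⟨Word.cons a Word.empty hne h1, ?_, ⟨a, [], by simp [Word.cons, Word.empty], haS⟩, ?_⟩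
  · intro g hg
    simp only [Word.cons, Word.empty_toList, List.mem_singleton] at hg
    subst hg
    exact ha
  · rw [Word.prod_cons]
    simp

theorem mul_startsWith_of_ne {i j : ι} (hij : i ≠ j) {a : G i}
    (ha : a ∉ (φ i).range) {S : Set (G i)} (haS : a ∈ S) {T : Set (G j)}
    {p : PushoutI φ} (hp : p ∈ startsWith φ j T) :
    of (φ := φ) i a * p ∈ startsWith φ i S := by
  obtain ⟨w, hred, ⟨c, t, hlist, -⟩, rfl⟩ := hp
  have h1 : a ≠ 1 := fun h => ha (h ▸ (φ i).range.one_mem)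
  have hne : w.fstIdx ≠ some i := by
    intro hcon
    rw [Word.fstIdx, hlist] at hcon
    simp only [List.head?_cons, Option.map_some, Option.some.injEq] at hcon
    exact hij hcon.symm
  refine ⟨Word.cons a w hne h1, ?_, ⟨a, w.toList, rfl, haS⟩, ?_⟩
  · intro g hg
    simp only [Word.cons] at hg
    rcases List.mem_cons.1 hg with rfl | hg
    · exact ha
    · exact hred g hg
  · rw [Word.prod_cons, map_mul, ofCoprodI_of]

theorem mul_startsWith_same {i : ι} {a : G i} {S T : Set (G i)}
    (hST : ∀ s ∈ S, a * s ∈ T ∧ a * s ∉ (φ i).range)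
    {p : PushoutI φ} (hp : p ∈ startsWith φ i S) :
    of (φ := φ) i a * p ∈ startsWith φ i T := by
  obtain ⟨w, hred, ⟨s, t, hlist, hsS⟩, rfl⟩ := hp
  obtain ⟨hT, hras⟩ := hST s hsS
  have h1 : a * s ≠ 1 := fun h => hras (h ▸ (φ i).range.one_mem)
  have hchain := w.chain_ne
  rw [hlist] at hchain
  have htail : (t : List (Σ i, G i)).Chain' fun l l' => l.fst ≠ l'.fst := hchain.tail
  let wt : Word G :=
    { toList := t
      ne_one := fun l hl => w.ne_one l (hlist ▸ List.mem_cons_of_mem _ hl)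
      chain_ne := htail }
  have hne : wt.fstIdx ≠ some i := by
    rw [Word.fstIdx_ne_iff]
    intro l hl
    exact (List.isChain_cons.1 hchain).1 l hl
  refine ⟨Word.cons (a * s) wt hne h1, ?_, ⟨a * s, t, rfl, hT⟩, ?_⟩
  · intro g hg
    simp only [Word.cons] at hg
    rcases List.mem_cons.1 hg with rfl | hg
    · exact hras
    · exact hred g (hlist ▸ List.mem_cons_of_mem _ hg)
  · have hw : w.prod = CoprodI.of s * wt.prod := by
      rw [Word.prod, Word.prod, hlist, List.map_cons, List.prod_cons]
    rw [Word.prod_cons, hw]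
    simp only [map_mul, ofCoprodI_of, mul_assoc]

theorem disjoint_startsWith (hφ : ∀ i, Injective (φ i)) {i j : ι} (hij : i ≠ j)
    {S : Set (G i)} {T : Set (G j)} :
    Disjoint (startsWith φ i S) (startsWith φ j T) := by
  rw [Set.disjoint_left]
  rintro p ⟨w₁, hred₁, ⟨a₁, t₁, hlist₁, -⟩, hp₁⟩ ⟨w₂, hred₂, ⟨a₂, t₂, hlist₂, -⟩, hp₂⟩
  obtain ⟨d⟩ := transversal_nonempty φ hφ
  obtain ⟨w₁', hprod₁, hmap₁⟩ := hred₁.exists_normalWord_prod_eq d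
  obtain ⟨w₂', hprod₂, hmap₂⟩ := hred₂.exists_normalWord_prod_eq d
  have : w₁' = w₂' := NormalWord.prod_injective (by rw [hprod₁, hprod₂, hp₁, hp₂])
  have hmaps : w₁.toList.map Sigma.fst = w₂.toList.map Sigma.fst := by
    rw [← hmap₁, this, hmap₂]
  rw [hlist₁, hlist₂] at hmaps
  simp only [List.map_cons, List.cons.injEq] at hmaps
  exact hij hmaps.1

end AmalgAux

/-- If `ι_A : C → A` and `ι_B : C → B` are injective, the index of `ι_A(C)` in `A` is at
least `3` (possibly infinite, i.e. the index is neither `1` nor `2`), and `ι_B(C)` is a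
proper subgroup of `B`, then the amalgamated free product `A *_C B` contains a
non-abelian free subgroup: there is an injective homomorphism from the free group of
rank `2` into `A *_C B`. -/
theorem amalgamated_free_product_contains_nonabelian_free_subgroup
    {A B C : Type} [Group A] [Group B] [Group C]
    (ιA : C →* A) (ιB : C →* B)
    (hιA : Function.Injective ιA) (hιB : Function.Injective ιB)
    (hidx1 : ιA.range.index ≠ 1) (hidx2 : ιA.range.index ≠ 2)
    (hproper : ιB.range ≠ ⊤) :
    ∃ f : FreeGroup (Fin 2) →* Monoid.PushoutI (amalgMaps ιA ιB),
      Function.Injective f := by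
  classical
  -- pick `b ∉ ιB.range`
  obtain ⟨b, hb⟩ : ∃ b : B, b ∉ ιB.range := by
    by_contra hcon
    push_neg at hcon
    exact hproper ((Subgroup.eq_top_iff' ιB.range).mpr hcon)
  -- pick `x y : A` in distinct nontrivial cosets of `ιA.range`
  have hnontriv : Nontrivial (A ⧸ ιA.range) := by
    by_contra hcon
    rw [not_nontrivial_iff_subsingleton] at hcon
    exact hidx1 (Nat.card_eq_one_iff_unique.mpr ⟨hcon, inferInstance⟩)
  obtain ⟨q, hq⟩ := exists_ne (((1 : A) : A ⧸ ιA.range))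
  obtain ⟨r, hr1, hrq⟩ : ∃ r : A ⧸ ιA.range, r ≠ ((1 : A) : A ⧸ ιA.range) ∧ r ≠ q := by
    by_contra hcon
    push_neg at hcon
    exact hidx2 ((Nat.card_eq_two_iff' (((1 : A) : A ⧸ ιA.range))).mpr ⟨q, hq, fun r hr => hcon r hr⟩)
  obtain ⟨x, rfl⟩ := QuotientGroup.mk_surjective q
  obtain ⟨y, rfl⟩ := QuotientGroup.mk_surjective r
  have hx : x ∉ ιA.range := by
    intro hmem
    refine hq (QuotientGroup.eq.mpr ?_)
    simpa using ιA.range.inv_mem hmem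
  have hy : y ∉ ιA.range := by
    intro hmem
    refine hr1 (QuotientGroup.eq.mpr ?_)
    simpa using ιA.range.inv_mem hmem
  have hxy : x⁻¹ * y ∉ ιA.range := by
    intro hmem
    exact hrq ((QuotientGroup.eq.mpr hmem).symm)
  have hninv : ∀ a : A, a ∉ ιA.range → a⁻¹ ∉ ιA.range := fun a ha hm =>
    ha (by simpa using ιA.range.inv_mem hm)
  have hyx : y⁻¹ * x ∉ ιA.range := by
    have := hninv _ hxy
    simpa [mul_inv_rev] using this
  have hbinv : b⁻¹ ∉ ιB.range := fun hm => hb (by simpa using ιB.range.inv_mem hm)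
  set φ := amalgMaps ιA ιB with hφdef
  have hφinj : ∀ i : Bool, Function.Injective (φ i) := by
    intro i
    cases i
    · exact hιB
    · exact hιA
  let oA : A →* Monoid.PushoutI φ := Monoid.PushoutI.of (φ := φ) true
  let oB : B →* Monoid.PushoutI φ := Monoid.PushoutI.of (φ := φ) false
  -- range facts transported
  have hx' : x ∉ ((φ true).range : Subgroup (CondGroup A B true)) := hx
  have hb' : b ∉ ((φ false).range : Subgroup (CondGroup A B false)) := hb
  have hy' : y ∉ ((φ true).range : Subgroup (CondGroup A B true)) := hy
  -- the two free generators
  set g : Monoid.PushoutI φ := oA x * oB b * oA (x⁻¹ * y) * oB b * oA y⁻¹ with hgdef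
  set h : Monoid.PushoutI φ := oB b * g * (oB b)⁻¹ with hhdef
  -- ping-pong sets
  set Sx : Set (CondGroup A B true) := {a : A | x⁻¹ * a ∈ ιA.range} with hSxdef
  set Sy : Set (CondGroup A B true) := {a : A | y⁻¹ * a ∈ ιA.range} with hSydef
  have hxSx : x ∈ Sx := by
    show x⁻¹ * x ∈ ιA.range
    rw [inv_mul_cancel]
    exact ιA.range.one_mem
  have hySy : y ∈ Sy := by
    show y⁻¹ * y ∈ ιA.range
    rw [inv_mul_cancel]
    exact ιA.range.one_mem
  have htf : (true : Bool) ≠ false := by decide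
  have hft : (false : Bool) ≠ true := by decide
  -- one forward step for g
  have hgstep : ∀ p : Monoid.PushoutI φ,
      (p ∈ AmalgAux.startsWith φ false Set.univ ∨ p ∈ AmalgAux.startsWith φ true Sx) →
      g * p ∈ AmalgAux.startsWith φ true Sx := by
    intro p hp
    have h1 : oA y⁻¹ * p ∈ AmalgAux.startsWith φ true (Set.univ : Set (CondGroup A B true)) := by
      rcases hp with hp | hp
      · exact AmalgAux.mul_startsWith_of_ne htf (hninv _ hy) (Set.mem_univ _) hp
      · refine AmalgAux.mul_startsWith_same (fun (s : A) hs => ⟨Set.mem_univ _, ?_⟩) hp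
        intro hm
        apply hyx
        have : y⁻¹ * x = (y⁻¹ * s) * (x⁻¹ * s)⁻¹ := by group
        rw [this]
        exact ιA.range.mul_mem hm (ιA.range.inv_mem hs)
    have h2 : oB b * (oA y⁻¹ * p) ∈ AmalgAux.startsWith φ false (Set.univ : Set (CondGroup A B false)) :=
      AmalgAux.mul_startsWith_of_ne hft hb (Set.mem_univ _) h1
    have h3 : oA (x⁻¹ * y) * (oB b * (oA y⁻¹ * p)) ∈
        AmalgAux.startsWith φ true (Set.univ : Set (CondGroup A B true)) :=
      AmalgAux.mul_startsWith_of_ne htf hxy (Set.mem_univ _) h2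
    have h4 : oB b * (oA (x⁻¹ * y) * (oB b * (oA y⁻¹ * p))) ∈
        AmalgAux.startsWith φ false (Set.univ : Set (CondGroup A B false)) :=
      AmalgAux.mul_startsWith_of_ne hft hb (Set.mem_univ _) h3
    have h5 : oA x * (oB b * (oA (x⁻¹ * y) * (oB b * (oA y⁻¹ * p)))) ∈
        AmalgAux.startsWith φ true Sx :=
      AmalgAux.mul_startsWith_of_ne htf hx hxSx h4
    have heq : g * p = oA x * (oB b * (oA (x⁻¹ * y) * (oB b * (oA y⁻¹ * p)))) := by
      rw [hgdef]; simp [mul_assoc]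
    rw [heq]; exact h5
  -- one backward step for g
  have hginvstep : ∀ p : Monoid.PushoutI φ,
      (p ∈ AmalgAux.startsWith φ false Set.univ ∨ p ∈ AmalgAux.startsWith φ true Sy) →
      g⁻¹ * p ∈ AmalgAux.startsWith φ true Sy := by
    intro p hp
    have h1 : oA x⁻¹ * p ∈ AmalgAux.startsWith φ true (Set.univ : Set (CondGroup A B true)) := by
      rcases hp with hp | hp
      · exact AmalgAux.mul_startsWith_of_ne htf (hninv _ hx) (Set.mem_univ _) hp
      · refine AmalgAux.mul_startsWith_same (fun (s : A) hs => ⟨Set.mem_univ _, ?_⟩) hp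
        intro hm
        apply hxy
        have : x⁻¹ * y = (x⁻¹ * s) * (y⁻¹ * s)⁻¹ := by group
        rw [this]
        exact ιA.range.mul_mem hm (ιA.range.inv_mem hs)
    have h2 : oB b⁻¹ * (oA x⁻¹ * p) ∈ AmalgAux.startsWith φ false (Set.univ : Set (CondGroup A B false)) :=
      AmalgAux.mul_startsWith_of_ne hft hbinv (Set.mem_univ _) h1
    have h3 : oA (y⁻¹ * x) * (oB b⁻¹ * (oA x⁻¹ * p)) ∈
        AmalgAux.startsWith φ true (Set.univ : Set (CondGroup A B true)) :=
      AmalgAux.mul_startsWith_of_ne htf hyx (Set.mem_univ _) h2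
    have h4 : oB b⁻¹ * (oA (y⁻¹ * x) * (oB b⁻¹ * (oA x⁻¹ * p))) ∈
        AmalgAux.startsWith φ false (Set.univ : Set (CondGroup A B false)) :=
      AmalgAux.mul_startsWith_of_ne hft hbinv (Set.mem_univ _) h3
    have h5 : oA y * (oB b⁻¹ * (oA (y⁻¹ * x) * (oB b⁻¹ * (oA x⁻¹ * p)))) ∈
        AmalgAux.startsWith φ true Sy :=
      AmalgAux.mul_startsWith_of_ne htf hy hySy h4
    have heq : g⁻¹ * p = oA y * (oB b⁻¹ * (oA (y⁻¹ * x) * (oB b⁻¹ * (oA x⁻¹ * p)))) := by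
      rw [hgdef]
      simp only [mul_inv_rev, ← map_inv, mul_inv_rev, inv_inv, mul_assoc]
    rw [heq]; exact h5
  -- powers of g
  have hgpos : ∀ n : ℕ, ∀ p ∈ AmalgAux.startsWith φ false (Set.univ : Set (CondGroup A B false)),
      g ^ (n + 1) * p ∈ AmalgAux.startsWith φ true Sx := by
    intro n
    induction n with
    | zero => intro p hp; rw [pow_one]; exact hgstep p (Or.inl hp)
    | succ n ih =>
      intro p hp
      have heq : g ^ (n + 1 + 1) * p = g * (g ^ (n + 1) * p) := by
        rw [pow_succ']; rw [mul_assoc]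
      rw [heq]
      exact hgstep _ (Or.inr (ih p hp))
  have hgneg : ∀ n : ℕ, ∀ p ∈ AmalgAux.startsWith φ false (Set.univ : Set (CondGroup A B false)),
      (g⁻¹) ^ (n + 1) * p ∈ AmalgAux.startsWith φ true Sy := by
    intro n
    induction n with
    | zero => intro p hp; rw [pow_one]; exact hginvstep p (Or.inl hp)
    | succ n ih =>
      intro p hp
      have heq : (g⁻¹) ^ (n + 1 + 1) * p = g⁻¹ * ((g⁻¹) ^ (n + 1) * p) := by
        rw [pow_succ']; rw [mul_assoc]
      rw [heq]
      exact hginvstep _ (Or.inr (ih p hp))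
  have hgz : ∀ n : ℤ, n ≠ 0 → ∀ p ∈ AmalgAux.startsWith φ false (Set.univ : Set (CondGroup A B false)),
      g ^ n * p ∈ AmalgAux.startsWith φ true Sx ∪ AmalgAux.startsWith φ true Sy := by
    intro n hn p hp
    rcases n with m | m
    · cases m with
      | zero => simp at hn
      | succ k =>
        left
        have heq : g ^ (Int.ofNat (k + 1)) = g ^ (k + 1) := zpow_natCast g (k + 1)
        rw [heq]
        exact hgpos k p hp
    · right
      have heq : g ^ (Int.negSucc m) = (g⁻¹) ^ (m + 1) := by
        rw [zpow_negSucc, inv_pow]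
      rw [heq]
      exact hgneg m p hp
  -- powers of h
  have hhz : ∀ n : ℤ, n ≠ 0 →
      ∀ p ∈ AmalgAux.startsWith φ true Sx ∪ AmalgAux.startsWith φ true Sy,
      h ^ n * p ∈ AmalgAux.startsWith φ false (Set.univ : Set (CondGroup A B false)) := by
    intro n hn p hp
    have h1 : oB b⁻¹ * p ∈ AmalgAux.startsWith φ false (Set.univ : Set (CondGroup A B false)) := by
      rcases hp with hp | hp
      · exact AmalgAux.mul_startsWith_of_ne hft hbinv (Set.mem_univ _) hp
      · exact AmalgAux.mul_startsWith_of_ne hft hbinv (Set.mem_univ _) hp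
    have h2 := hgz n hn _ h1
    have h3 : oB b * (g ^ n * (oB b⁻¹ * p)) ∈
        AmalgAux.startsWith φ false (Set.univ : Set (CondGroup A B false)) := by
      rcases h2 with h2 | h2
      · exact AmalgAux.mul_startsWith_of_ne hft hb (Set.mem_univ _) h2
      · exact AmalgAux.mul_startsWith_of_ne hft hb (Set.mem_univ _) h2
    have heq : h ^ n * p = oB b * (g ^ n * (oB b⁻¹ * p)) := by
      rw [hhdef, conj_zpow]
      simp only [← map_inv, mul_assoc]
    rw [heq]; exact h3
  -- assemble via the ping-pong lemma for free products
  set X : Fin 2 → Set (Monoid.PushoutI φ) :=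
    ![AmalgAux.startsWith φ true Sx ∪ AmalgAux.startsWith φ true Sy,
      AmalgAux.startsWith φ false Set.univ] with hXdef
  let F : ∀ _ : Fin 2, FreeGroup Unit →* Monoid.PushoutI φ :=
    fun i => FreeGroup.lift fun _ => (![g, h] : Fin 2 → Monoid.PushoutI φ) i
  have hinj : Function.Injective (Monoid.CoprodI.lift F) := by
    apply Monoid.CoprodI.lift_injective_of_ping_pong F _ X
    · intro i
      fin_cases i
      · exact ⟨oA x, Or.inl (AmalgAux.of_mem_startsWith hx hxSx)⟩
      · exact ⟨oB b, AmalgAux.of_mem_startsWith hb (Set.mem_univ _)⟩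
    · intro i j hij
      fin_cases i <;> fin_cases j <;> first
        | exact absurd rfl hij
        | skip
      · show Disjoint (X 0) (X 1)
        rw [hXdef]
        simp only [Matrix.cons_val_zero, Matrix.cons_val_one, Matrix.head_cons]
        exact Disjoint.union_left (AmalgAux.disjoint_startsWith hφinj htf)
          (AmalgAux.disjoint_startsWith hφinj htf)
      · show Disjoint (X 1) (X 0)
        rw [hXdef]
        simp only [Matrix.cons_val_zero, Matrix.cons_val_one, Matrix.head_cons]
        exact (Disjoint.union_left (AmalgAux.disjoint_startsWith hφinj htf)
          (AmalgAux.disjoint_startsWith hφinj htf)).symm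
    · intro i j hij
      refine FreeGroup.freeGroupUnitEquivInt.forall_congr_left.mpr ?_
      intro n hne1
      have hn0 : n ≠ 0 := by
        rintro rfl
        apply hne1
        simp [FreeGroup.freeGroupUnitEquivInt]
      change F i (FreeGroup.of () ^ n) • X j ⊆ X i
      simp only [F, map_zpow, FreeGroup.lift_apply_of]
      rintro q ⟨p, hp, rfl⟩
      simp only [smul_eq_mul]
      fin_cases i <;> fin_cases j
      · exact absurd rfl hij
      · exact hgz n hn0 p hp
      · exact hhz n hn0 p hp
      · exact absurd rfl hij
    · right
      refine ⟨0, ?_⟩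
      rw [FreeGroup.freeGroupUnitEquivInt.cardinal_eq, Cardinal.mk_denumerable]
      exact (Cardinal.nat_lt_aleph0 3).le
  exact ⟨(Monoid.CoprodI.lift F).comp (freeGroupEquivCoprodI (ι := Fin 2)).toMonoidHom,
    hinj.comp (MulEquiv.injective _)⟩
end

section
/- Let G be a group, let A and B be subgroups of G, and let φ : A → B be an isomorphism. If A ≠ G and B ≠ G, then the HNN extension G*_φ = ⟨G, t | t a t⁻¹ = φ(a) for all a ∈ A⟩ contains a non-abelian free subgroup; that is, there exists an injective group homomorphism from the free group of rank 2 into G*_φ. -/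
/-!
Pick `c ∈ G` outside `A ∪ B` (a group is never the union of two proper subgroups) and send the
free generators to `t` and `c t c⁻¹`. A nontrivial reduced word in these two letters expands to a
word in `t^{±1}` and elements of `G` in which, between two consecutive `t`-letters, there stands
either `1` (and then the two exponents agree, as the word is reduced) or `c^{±1} ∉ A ∪ B`. Such a
word admits no pinch `t^ε a t^{-ε}` with `a ∈ A` resp. `B`, so by Britton's lemma it is not `1`.
-/

open HNNExtension HNNExtension.NormalWord

theorem Subgroup.exists_notMem_and_notMem {G : Type*} [Group G] {A B : Subgroup G}
    (hA : A ≠ ⊤) (hB : B ≠ ⊤) : ∃ c : G, c ∉ A ∧ c ∉ B := by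
  by_contra! h
  have hcover : ((⊤ : Subgroup G) : Set G) ⊆ A ∪ B := fun c _ => or_iff_not_imp_left.2 (h c)
  rcases SubgroupClass.subset_union.1 hcover with hle | hle
  exacts [hA (top_le_iff.1 hle), hB (top_le_iff.1 hle)]

namespace HNNExtension

variable {G : Type*} [Group G] {A B : Subgroup G} {ι : Type*} (g : ι → G)

/-- The word `L` is sent to `∏ g_i t^{±1} g_i⁻¹`; regrouped as a `ReducedWord`, its head is the
first conjugator, and each `t`-letter is followed by `g_i⁻¹ g_j` for the next conjugator `g_j`. -/
def conjHead : List (ι × Bool) → G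
  | [] => 1
  | ℓ :: _ => g ℓ.1

def conjLetters : List (ι × Bool) → List (ℤˣ × G)
  | [] => []
  | ℓ :: L => (cond ℓ.2 1 (-1), (g ℓ.1)⁻¹ * conjHead g L) :: conjLetters L

theorem conjLetters_eq_nil_iff {L : List (ι × Bool)} : conjLetters g L = [] ↔ L = [] := by
  cases L <;> simp [conjLetters]

theorem prod_conjLetters (φ : A ≃* B) (L : List (ι × Bool)) :
    of (conjHead g L) * ((conjLetters g L).map fun x =>
        (t : HNNExtension G A B φ) ^ (x.1 : ℤ) * of x.2).prod =
      (L.map fun x => cond x.2 (of (g x.1) * t * of (g x.1)⁻¹)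
        (of (g x.1) * t * of (g x.1)⁻¹)⁻¹).prod := by
  induction L with
  | nil => simp [conjHead, conjLetters]
  | cons ℓ L ih =>
    obtain ⟨i, b⟩ := ℓ
    rw [List.map_cons, List.prod_cons, ← ih]
    cases b <;> simp [conjHead, conjLetters, mul_assoc]

theorem isChain_conjLetters (hg : Pairwise fun i j => (g i)⁻¹ * g j ∉ A ∧ (g i)⁻¹ * g j ∉ B) :
    ∀ {L : List (ι × Bool)}, FreeGroup.IsReduced L →
      (conjLetters g L).IsChain fun a b => a.2 ∈ toSubgroup A B a.1 → a.1 = b.1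
  | [], _ => List.isChain_nil
  | [_], _ => List.isChain_singleton _
  | ℓ :: ℓ' :: L, hL => by
    rw [FreeGroup.isReduced_cons_cons] at hL
    refine List.isChain_cons_cons.2 ⟨fun hmem => ?_, isChain_conjLetters hg hL.2⟩
    by_cases hi : ℓ.1 = ℓ'.1
    · rw [hL.1 hi]
    · obtain ⟨hA, hB⟩ := hg hi
      obtain ⟨i, b⟩ := ℓ
      cases b <;> simp_all [conjHead]

theorem lift_conj_t_injective (φ : A ≃* B)
    (hg : Pairwise fun i j => (g i)⁻¹ * g j ∉ A ∧ (g i)⁻¹ * g j ∉ B) :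
    Function.Injective (FreeGroup.lift fun i => of (g i) * t * of (g i)⁻¹ :
      FreeGroup ι →* HNNExtension G A B φ) := by
  classical
  rw [injective_iff_map_eq_one]
  intro w hw
  let w' : ReducedWord G A B := ⟨conjHead g w.toWord, conjLetters g w.toWord,
    isChain_conjLetters g hg FreeGroup.isReduced_toWord⟩
  have hprod : w'.prod φ = 1 := by
    rw [← hw, ← FreeGroup.mk_toWord (x := w), FreeGroup.lift_mk]
    exact prod_conjLetters g φ w.toWord
  have hnil := ReducedWord.toList_eq_nil_of_mem_of_range φ w' (hprod ▸ one_mem _)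
  rwa [conjLetters_eq_nil_iff, FreeGroup.toWord_eq_nil_iff] at hnil

end HNNExtension

/-- If `A` and `B` are proper subgroups of a group `G` and `φ : A ≃ B` is an isomorphism,
then the HNN extension `G*_φ = ⟨G, t | t a t⁻¹ = φ(a) for a ∈ A⟩` contains a non-abelian
free subgroup: there is an injective homomorphism from the free group of rank `2`
into `G*_φ`. -/
theorem hnn_extension_contains_nonabelian_free_subgroup
    {G : Type} [Group G] (A B : Subgroup G) (φ : A ≃* B)
    (hA : A ≠ ⊤) (hB : B ≠ ⊤) :
    ∃ f : FreeGroup (Fin 2) →* HNNExtension G A B φ, Function.Injective f := by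
  obtain ⟨c, hcA, hcB⟩ := Subgroup.exists_notMem_and_notMem hA hB
  refine ⟨_, lift_conj_t_injective ![1, c] φ fun i j hij => ?_⟩
  fin_cases i <;> fin_cases j <;> simp_all [inv_mem_iff]
end

section
/- Let A and B be non-trivial groups, and suppose it is not the case that both A and B have exactly two elements. Then the free product A * B contains a non-abelian free subgroup; that is, there exists an injective group homomorphism from the free group of rank 2 into A * B. -/
/-!
Swapping the factors if necessary, `A` has more than two elements: take distinct non-trivial
`a₁, a₂ ∈ A` and a non-trivial `b ∈ B`. The commutators `⁅aₜ, b⁆ = aₜ b aₜ⁻¹ b⁻¹` freely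
generate a free group, by ping-pong on reduced words: `⁅aₜ, b⁆` sends every word not beginning
with `b aₜ` to a word beginning with `aₜ b`, and `⁅aₜ, b⁆⁻¹ = ⁅b, aₜ⁆` sends every word not
beginning with `aₜ b` to one beginning with `b aₜ`. Indeed `b⁻¹` cancels at most a leading `b`,
after which `aₜ⁻¹` leaves a non-trivial first letter from `A`, so `b` and then `aₜ` are
prepended without cancellation.
-/

open Function Monoid
open scoped commutatorElement

namespace Monoid.CoprodI.Word

variable {ι : Type*} {M : ι → Type*} [∀ i, Group (M i)] [DecidableEq ι]
  [∀ i, DecidableEq (M i)]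

theorem toList_of_smul_of_fstIdx_ne {i : ι} {m : M i} (hm : m ≠ 1) {w : Word M}
    (hw : w.fstIdx ≠ some i) : (of m • w).toList = ⟨i, m⟩ :: w.toList := by
  rw [← cons_eq_smul (h1 := hw) (h2 := hm), cons_toList]

theorem fstIdx_of_smul_of_fstIdx_ne {i : ι} {m : M i} (hm : m ≠ 1) {w : Word M}
    (hw : w.fstIdx ≠ some i) : (of m • w).fstIdx = some i := by
  simp [fstIdx, toList_of_smul_of_fstIdx_ne hm hw]

theorem fstIdx_of_smul_of_head?_ne {i : ι} {m : M i} (hm : m ≠ 1) {w : Word M}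
    (hw : w.toList.head? ≠ some ⟨i, m⁻¹⟩) : (of m • w).fstIdx = some i := by
  have hw' := equivPair_head_smul_equivPair_tail (i := i) w
  set p := equivPair i w
  have hhead : m * p.head ≠ 1 := by
    intro h
    rw [eq_inv_of_mul_eq_one_right h] at hw'
    rw [← hw', toList_of_smul_of_fstIdx_ne (inv_ne_one.2 hm) p.fstIdx_ne] at hw
    exact hw rfl
  rw [← hw', smul_smul, ← map_mul]
  exact fstIdx_of_smul_of_fstIdx_ne hhead p.fstIdx_ne

theorem head?_inv_smul_ne_of_take_two_ne {i j : ι} (hij : i ≠ j) {p : M i} {q : M j}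
    (hq : q ≠ 1) {w : Word M} (hw : w.toList.take 2 ≠ [⟨j, q⟩, ⟨i, p⟩]) :
    (of q⁻¹ • w).toList.head? ≠ some ⟨i, p⟩ := by
  by_cases hhead : w.toList.head? = some ⟨j, q⟩
  · cases w using consRecOn with
    | empty => simp at hhead
    | cons k m w hfst hm =>
      obtain ⟨rfl, hmq⟩ := Sigma.mk.inj_iff.1 (Option.some.inj hhead)
      obtain rfl := eq_of_heq hmq
      rw [cons_eq_smul, map_inv, inv_smul_smul]
      intro h
      apply hw
      rcases hl : w.toList with _ | ⟨l, t⟩ <;> simp_all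
  · have hfst := fstIdx_of_smul_of_head?_ne (inv_ne_one.2 hq) (w := w) (by rwa [inv_inv])
    intro h
    rw [fstIdx, h] at hfst
    exact hij (Option.some.inj hfst)

theorem take_two_commutator_smul {i j : ι} (hij : i ≠ j) {p : M i} {q : M j} (hp : p ≠ 1)
    (hq : q ≠ 1) {w : Word M} (hw : w.toList.take 2 ≠ [⟨j, q⟩, ⟨i, p⟩]) :
    ((⁅of p, of q⁆ : CoprodI M) • w).toList.take 2 = [⟨i, p⟩, ⟨j, q⟩] := by
  set w' := of p⁻¹ • of q⁻¹ • w
  have hw' : w'.fstIdx = some i :=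
    fstIdx_of_smul_of_head?_ne (inv_ne_one.2 hp)
      (by rw [inv_inv]; exact head?_inv_smul_ne_of_take_two_ne hij hq hw)
  have hw'_ne : w'.fstIdx ≠ some j := by simp [hw', hij]
  have hqw' : (of q • w').fstIdx ≠ some i := by
    simp [fstIdx_of_smul_of_fstIdx_ne hq hw'_ne, Ne.symm hij]
  have hcomm : (⁅of p, of q⁆ : CoprodI M) • w = of p • of q • w' := by
    simp only [w', commutatorElement_def, mul_smul, map_inv]
  rw [hcomm, toList_of_smul_of_fstIdx_ne hp hqw', toList_of_smul_of_fstIdx_ne hq hw'_ne]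
  rfl

end Monoid.CoprodI.Word

namespace Monoid.CoprodI

universe u v

variable {ι : Type u} {M : ι → Type v} [∀ i, Group (M i)]

theorem injective_lift_commutator {κ : Type (max u v)} [Nontrivial κ] {i j : ι} (hij : i ≠ j)
    {p : κ → M i} (hp : ∀ t, p t ≠ 1) (hp_inj : Injective p) {q : M j} (hq : q ≠ 1) :
    Injective (FreeGroup.lift fun t => (⁅of (p t), of q⁆ : CoprodI M)) := by
  classical
  let startsWith (x y : Σ i, M i) : Set (Word M) := {w | w.toList.take 2 = [x, y]}
  have disjoint_startsWith {x y x' y'} (hne : [x, y] ≠ [x', y']) :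
      Disjoint (startsWith x y) (startsWith x' y') :=
    Set.disjoint_left.2 fun w hw hw' => hne (hw.symm.trans hw')
  refine FreeGroup.injective_lift_of_ping_pong (G := CoprodI M) _
    (fun t => startsWith ⟨i, p t⟩ ⟨j, q⟩) (fun t => startsWith ⟨j, q⟩ ⟨i, p t⟩)
    (fun t => ⟨_, Word.take_two_commutator_smul hij (hp t) hq (w := .empty) (by simp)⟩)
    (fun s t hst => disjoint_startsWith (by simpa using hp_inj.ne hst))
    (fun s t hst => disjoint_startsWith (by simpa using hp_inj.ne hst))
    (fun s t => disjoint_startsWith (by simp [hij])) ?_ ?_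
  · rintro t _ ⟨w, hw, rfl⟩
    exact Word.take_two_commutator_smul hij (hp t) hq hw
  · rintro t _ ⟨w, hw, rfl⟩
    rw [Pi.inv_apply, commutatorElement_inv]
    exact Word.take_two_commutator_smul (Ne.symm hij) hq (hp t) hw

end Monoid.CoprodI

namespace Monoid.Coprod

universe u

variable {A B : Type u} [Group A] [Group B]

instance : ∀ b : Bool, Group (cond b A B)
  | true => ‹Group A›
  | false => ‹Group B›

theorem injective_lift_commutator {κ : Type u} [Nontrivial κ] {a : κ → A} (ha : ∀ t, a t ≠ 1)
    (ha_inj : Injective a) {b : B} (hb : b ≠ 1) :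
    Injective (FreeGroup.lift fun t => ⁅(inl (a t) : A ∗ B), (inr b : A ∗ B)⁆) := by
  -- `A ∗ B` has no reduced-word API, so the ping-pong is played in the indexed free product.
  let M : Bool → Type u := fun i => cond i A B
  let toCoprodI : A ∗ B →* CoprodI M :=
    lift (CoprodI.of (M := M) (i := true)) (CoprodI.of (M := M) (i := false))
  have hcomp :
      toCoprodI.comp (FreeGroup.lift fun t => ⁅(inl (a t) : A ∗ B), (inr b : A ∗ B)⁆) =
      FreeGroup.lift fun t =>
        ⁅CoprodI.of (M := M) (i := true) (a t), CoprodI.of (M := M) (i := false) b⁆ :=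
    FreeGroup.ext_hom _ _ fun t => by simp [toCoprodI, map_commutatorElement]
  apply Injective.of_comp (f := toCoprodI)
  rw [← MonoidHom.coe_comp, hcomp]
  exact CoprodI.injective_lift_commutator (by decide) ha ha_inj hb

end Monoid.Coprod

theorem exists_ne_ne_of_card_ne_two {α : Type*} [Nontrivial α] (x : α) (h : Nat.card α ≠ 2) :
    ∃ y z : α, y ≠ x ∧ z ≠ x ∧ y ≠ z := by
  obtain ⟨y, hy⟩ := exists_ne x
  by_contra! H
  exact h ((Nat.card_eq_two_iff' x).2 ⟨y, hy, fun z hz => H z y hz hy⟩)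

open Coprod in
theorem exists_injective_freeGroup_coprod {A B : Type} [Group A] [Group B] [Nontrivial A]
    [Nontrivial B] (hA : Nat.card A ≠ 2) :
    ∃ f : FreeGroup (Fin 2) →* A ∗ B, Injective f := by
  obtain ⟨a₁, a₂, ha₁, ha₂, ha₁₂⟩ := exists_ne_ne_of_card_ne_two (1 : A) hA
  obtain ⟨b, hb⟩ := exists_ne (1 : B)
  exact ⟨_, Coprod.injective_lift_commutator (a := ![a₁, a₂])
    (by simp [Fin.forall_fin_two, ha₁, ha₂]) (injective_pair_iff_ne.2 ha₁₂) hb⟩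

/-- If `A` and `B` are non-trivial groups and not both of them have exactly two elements,
then the free product `A * B` contains a non-abelian free subgroup: there is an
injective homomorphism from the free group of rank `2` into `A * B`. -/
theorem free_product_contains_nonabelian_free_subgroup
    {A B : Type} [Group A] [Group B] [Nontrivial A] [Nontrivial B]
    (h : ¬(Nat.card A = 2 ∧ Nat.card B = 2)) :
    ∃ f : FreeGroup (Fin 2) →* Monoid.Coprod A B, Function.Injective f := by
  rcases not_and_or.mp h with hA | hB
  · exact exists_injective_freeGroup_coprod hA
  · obtain ⟨f, hf⟩ := exists_injective_freeGroup_coprod (B := A) hB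
    exact ⟨(Coprod.swap B A).comp f, Coprod.swap_injective.comp hf⟩
end

section
/- Let π be a torsion-free group which is CA, i.e., the centralizer of every non-identity element of π is abelian. Let g ∈ π with g ≠ 1, and suppose that the centralizer C_π(g) is an infinite cyclic group. Then C_π(g) is self-normalizing: the normalizer of C_π(g) in π equals C_π(g). -/
/-!
Let `c` generate `C = C_π(g)` and let `n` normalize `C`. Conjugation by `n` is an automorphism
of the infinite cyclic group `C`, so `n c n⁻¹ = c` or `n c n⁻¹ = c⁻¹`.
In the first case `n` and `g` both commute with `c ≠ 1`, hence with each other by CA.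
In the second case `n²` commutes with `c`, and both `n` and `c` lie in the abelian group
`C_π(n²)` (or `n = 1` if `n² = 1`, by torsion-freeness); so `c = c⁻¹`, contradicting
torsion-freeness.
-/

open Subgroup

def Group.IsCA (G : Type*) [Group G] : Prop :=
  ∀ x : G, x ≠ 1 → ∀ a ∈ centralizer {x}, ∀ b ∈ centralizer {x}, a * b = b * a

section

variable {G : Type*} [Group G]

theorem Group.IsCA.commute_of_commute (hG : Group.IsCA G) {x a b : G} (hx : x ≠ 1)
    (ha : Commute a x) (hb : Commute b x) : Commute a b :=
  hG x hx a (mem_centralizer_singleton_iff.2 ha) b (mem_centralizer_singleton_iff.2 hb)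

theorem conj_eq_self_or_inv_of_mem_normalizer_zpowers {c n : G} (hc : ¬IsOfFinOrder c)
    (hn : n ∈ normalizer (zpowers c : Set G)) :
    n * c * n⁻¹ = c ∨ n * c * n⁻¹ = c⁻¹ := by
  obtain ⟨a, ha⟩ := mem_zpowers_iff.1 ((mem_normalizer_iff.1 hn c).1 (mem_zpowers c))
  obtain ⟨b, hb⟩ := mem_zpowers_iff.1 ((mem_normalizer_iff''.1 hn c).1 (mem_zpowers c))
  have hab : c ^ (a * b) = c ^ (1 : ℤ) :=
    calc c ^ (a * b) = (n⁻¹ * c * n) ^ a := by rw [zpow_mul', hb]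
      _ = n⁻¹ * c ^ a * n := by simpa using conj_zpow (a := n⁻¹) (b := c) (i := a)
      _ = c ^ (1 : ℤ) := by rw [ha]; group
  have hab_one : a * b = 1 := injective_zpow_iff_not_isOfFinOrder.2 hc hab
  rcases Int.eq_one_or_neg_one_of_mul_eq_one hab_one with rfl | rfl
  · exact .inl (by simpa using ha.symm)
  · exact .inr (by simpa using ha.symm)

theorem Group.IsCA.conj_ne_inv (htf : ∀ g : G, g ≠ 1 → ¬IsOfFinOrder g) (hG : Group.IsCA G)
    {c : G} (hc : c ≠ 1) (n : G) : n * c * n⁻¹ ≠ c⁻¹ := by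
  intro hinv
  have hsq : Commute c (n * n) := by
    refine (mul_inv_eq_iff_eq_mul.1 ?_).symm
    calc n * n * c * (n * n)⁻¹ = n * (n * c * n⁻¹) * n⁻¹ := by group
      _ = n * c⁻¹ * n⁻¹ := by rw [hinv]
      _ = (n * c * n⁻¹)⁻¹ := by group
      _ = c := by rw [hinv, inv_inv]
  have hnc : Commute n c := by
    by_cases hnn : n * n = 1
    · have hn : n = 1 := by
        by_contra hn
        exact htf n hn (isOfFinOrder_iff_pow_eq_one.2 ⟨2, two_pos, by rw [pow_two, hnn]⟩)
      exact hn ▸ Commute.one_left c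
    · exact hG.commute_of_commute hnn ((Commute.refl n).mul_right (Commute.refl n)) hsq
  have hcc : c * c = 1 :=
    inv_eq_iff_mul_eq_one.1 (hinv.symm.trans (mul_inv_eq_of_eq_mul hnc.eq))
  exact htf c hc (isOfFinOrder_iff_pow_eq_one.2 ⟨2, two_pos, by rw [pow_two, hcc]⟩)

end

theorem centralizer_self_normalizing_of_CA_general
    {π : Type} [Group π] (htf : ∀ g : π, g ≠ 1 → ¬IsOfFinOrder g)
    (hCA : ∀ x : π, x ≠ 1 →
      ∀ a ∈ Subgroup.centralizer {x}, ∀ b ∈ Subgroup.centralizer {x}, a * b = b * a)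
    (g : π) (hg : g ≠ 1)
    (hcyc : IsCyclic ↥(Subgroup.centralizer {g})) :
    Subgroup.normalizer ((Subgroup.centralizer {g} : Subgroup π) : Set π) = Subgroup.centralizer {g} := by
  obtain ⟨c, hcC⟩ := (centralizer {g}).isCyclic_iff_exists_zpowers_eq_top.1 hcyc
  refine le_antisymm (fun n hn => ?_) le_normalizer
  rw [← hcC] at hn
  have hgc : g ∈ zpowers c := hcC ▸ mem_centralizer_singleton_iff.2 rfl
  obtain ⟨m, rfl⟩ := mem_zpowers_iff.1 hgc
  have hc : c ≠ 1 := by rintro rfl; simp at hg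
  rcases conj_eq_self_or_inv_of_mem_normalizer_zpowers (htf c hc) hn with hconj | hinv
  · have hnc : Commute n c := mul_inv_eq_iff_eq_mul.1 hconj
    exact mem_centralizer_singleton_iff.2
      (Group.IsCA.commute_of_commute hCA hc hnc ((Commute.refl c).zpow_left m))
  · exact absurd hinv (Group.IsCA.conj_ne_inv htf hCA hc n)

/-- Let `π` be a torsion-free group which is CA (the centralizer of every non-identity
element is abelian). If `g ≠ 1` and the centralizer of `g` is infinite cyclic, then the
centralizer of `g` is self-normalizing. -/
theorem centralizer_self_normalizing_of_CA
    {π : Type} [Group π] (htf : ∀ g : π, g ≠ 1 → ¬IsOfFinOrder g)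
    (hCA : ∀ x : π, x ≠ 1 →
      ∀ a ∈ Subgroup.centralizer {x}, ∀ b ∈ Subgroup.centralizer {x}, a * b = b * a)
    (g : π) (hg : g ≠ 1)
    (hcyc : IsCyclic ↥(Subgroup.centralizer {g}))
    (hinf : Infinite ↥(Subgroup.centralizer {g})) :
    Subgroup.normalizer ((Subgroup.centralizer {g} : Subgroup π) : Set π) = Subgroup.centralizer {g} :=
  centralizer_self_normalizing_of_CA_general htf hCA g hg hcyc
end

section
/- Let G be a residually finite group and let H be a virtual retract of G, i.e., there exist a finite-index subgroup K of G with H ≤ K and a homomorphism ρ : K → H such that ρ(h) = h for all h ∈ H. Then H is separable in G: for every g ∈ G with g ∉ H there exists a homomorphism φ from G to a finite group such that φ(g) ∉ φ(H). -/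
/-- A subgroup `S` of a group `G` is separable if for every `g ∈ G` with `g ∉ S` there
is a homomorphism `φ` from `G` to a finite group with `φ g ∉ φ(S)`. -/
def IsSeparableSubgroup {G : Type} [Group G] (S : Subgroup G) : Prop :=
  ∀ g : G, g ∉ S → ∃ (Q : Type) (_ : Group Q) (_ : Finite Q) (φ : G →* Q),
    φ g ∉ S.map φ

/-- A group `G` is residually finite if every non-trivial element has non-trivial image
under some homomorphism to a finite group. -/
def IsResiduallyFinite (G : Type) [Group G] : Prop :=
  ∀ g : G, g ≠ 1 → ∃ (Q : Type) (_ : Group Q) (_ : Finite Q) (φ : G →* Q), φ g ≠ 1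

/-- If `G` is residually finite and `H` is a virtual retract of `G` (there are a
finite-index subgroup `K` of `G` containing `H` and a homomorphism `ρ : K → H` restricting
to the identity on `H`), then `H` is separable in `G`. -/
theorem virtual_retract_is_separable
    {G : Type} [Group G] (hRF : IsResiduallyFinite G)
    (H K : Subgroup G) (hHK : H ≤ K) (hK : K.FiniteIndex)
    (ρ : ↥K →* G) (hρmem : ∀ k : ↥K, ρ k ∈ H)
    (hρfix : ∀ (h : G) (hh : h ∈ H), ρ ⟨h, hHK hh⟩ = h) :
    IsSeparableSubgroup H := by
  intro g hg
  by_cases hgK : g ∈ K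
  · -- g ∈ K, use residual finiteness on (ρ ⟨g⟩)⁻¹ * g
    set k : ↥K := ⟨g, hgK⟩
    have hx : (ρ k)⁻¹ * g ≠ 1 := by
      intro h
      apply hg
      have : ρ k = g := by
        have := mul_eq_one_iff_eq_inv.mp h
        have h2 : (ρ k)⁻¹ = g⁻¹ := this
        calc ρ k = ((ρ k)⁻¹)⁻¹ := by group
        _ = (g⁻¹)⁻¹ := by rw [h2]
        _ = g := by group
      rw [← this]; exact hρmem k
    obtain ⟨Q, _, _, φ₀, hφ₀⟩ := hRF _ hx
    have : Finite φ₀.range := Subtype.finite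
    have : Finite (φ₀.comp ρ).range := Subtype.finite
    have : Finite (φ₀.comp K.subtype).range := Subtype.finite
    set N₀ : Subgroup ↥K := (φ₀.comp ρ).ker ⊓ (φ₀.comp K.subtype).ker with hN₀
    have hN₀fi : N₀.FiniteIndex := inferInstance
    set N : Subgroup G := N₀.map K.subtype with hN
    have hNfi : N.FiniteIndex := by
      constructor
      rw [hN, Subgroup.index_map_subtype]
      exact Nat.mul_ne_zero hN₀fi.index_ne_zero hK.index_ne_zero
    set L := N.normalCore with hL
    have hLfi : L.FiniteIndex := inferInstance
    refine ⟨G ⧸ L, inferInstance, inferInstance, QuotientGroup.mk' L, ?_⟩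
    rintro ⟨h, hh, heq⟩
    have : h⁻¹ * g ∈ L := by
      rw [← QuotientGroup.eq]
      exact heq
    have hmem : h⁻¹ * g ∈ N := N.normalCore_le this
    rw [hN] at hmem
    obtain ⟨n₀, hn₀, hn₀eq⟩ := hmem
    obtain ⟨hn₁, hn₂⟩ := hn₀
    -- g = h * n₀
    have hgdec : g = h * (n₀ : G) := by
      have : (n₀ : G) = h⁻¹ * g := hn₀eq
      rw [this]; group
    have hk : k = (⟨h, hHK hh⟩ : ↥K) * n₀ := by
      apply Subtype.ext
      simpa using hgdec
    have hρk : ρ k = h * ρ n₀ := by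
      rw [hk, map_mul, hρfix h hh]
    apply hφ₀
    have h1 : φ₀ (ρ n₀) = 1 := hn₁
    have h2 : φ₀ (n₀ : G) = 1 := hn₂
    calc φ₀ ((ρ k)⁻¹ * g) = (φ₀ (ρ k))⁻¹ * φ₀ g := by rw [map_mul, map_inv]
    _ = (φ₀ h * φ₀ (ρ n₀))⁻¹ * (φ₀ h * φ₀ (n₀ : G)) := by
        rw [hρk, map_mul, hgdec, map_mul]
    _ = 1 := by rw [h1, h2]; group
  · -- g ∉ K, use quotient by normal core of K
    set L := K.normalCore with hL
    have hLfi : L.FiniteIndex := inferInstance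
    refine ⟨G ⧸ L, inferInstance, inferInstance, QuotientGroup.mk' L, ?_⟩
    rintro ⟨h, hh, heq⟩
    have : h⁻¹ * g ∈ L := by
      rw [← QuotientGroup.eq]
      exact heq
    have : h⁻¹ * g ∈ K := K.normalCore_le this
    exact hgK (by simpa using K.mul_mem (hHK hh) this)
end

section
/- Let G be a group, H a finite-index subgroup of G, and S a subgroup of H. If S is separable in H, then S is separable in G. -/
open Subgroup in
theorem isSeparableSubgroup_iff_exists_finiteIndex {G : Type} [Group G] (S : Subgroup G) :
    IsSeparableSubgroup S ↔ ∀ g ∉ S, ∃ K : Subgroup G, K.FiniteIndex ∧ S ≤ K ∧ g ∉ K := by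
  constructor
  · intro hS g hg
    obtain ⟨Q, _, _, φ, hφ⟩ := hS g hg
    exact ⟨(S.map φ).comap φ, finiteIndex_of_le (ker_le_comap φ _), le_comap_map φ S, hφ⟩
  · intro hS g hg
    obtain ⟨K, hK, hSK, hgK⟩ := hS g hg
    refine ⟨G ⧸ K.normalCore, inferInstance, inferInstance, QuotientGroup.mk' _, ?_⟩
    rintro ⟨s, hs, hsg⟩
    have hsg : s⁻¹ * g ∈ K.normalCore := QuotientGroup.eq.mp hsg
    exact hgK (by simpa using K.mul_mem (hSK hs) (K.normalCore_le hsg))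

namespace Subgroup

instance finiteIndex_map_subtype {G : Type} [Group G] {H : Subgroup G} [H.FiniteIndex]
    (L : Subgroup H) [L.FiniteIndex] : (L.map H.subtype).FiniteIndex :=
  ⟨by
    rw [index_map_subtype]
    exact mul_ne_zero FiniteIndex.index_ne_zero FiniteIndex.index_ne_zero⟩

end Subgroup

open Subgroup in
/-- If `H` is a finite-index subgroup of `G` and `S ≤ H` is separable as a subgroup
of `H`, then `S` is separable as a subgroup of `G`. -/
theorem separable_of_separable_in_finiteIndex
    {G : Type} [Group G] (H : Subgroup G) (hH : H.FiniteIndex)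
    (S : Subgroup G) (hSH : S ≤ H)
    (hsep : IsSeparableSubgroup (S.subgroupOf H)) :
    IsSeparableSubgroup S := by
  rw [isSeparableSubgroup_iff_exists_finiteIndex] at hsep ⊢
  intro g hg
  by_cases hgH : g ∈ H
  · obtain ⟨L, hL, hSL, hgL⟩ := hsep ⟨g, hgH⟩ (by simpa [mem_subgroupOf] using hg)
    refine ⟨L.map H.subtype, inferInstance, fun s hs ↦ ⟨⟨s, hSH hs⟩, hSL hs, rfl⟩, ?_⟩
    rintro ⟨x, hx, rfl⟩
    exact hgL hx
  · exact ⟨H, hH, hSH, hgH⟩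
end

section
/- Let G be a group and let H be a finite-index subgroup of G. If H is LERF, then G is LERF. -/
/-- A group is LERF (subgroup separable) if each of its finitely generated subgroups
is separable. -/
def IsLERF (G : Type) [Group G] : Prop :=
  ∀ S : Subgroup G, S.FG → IsSeparableSubgroup S

/-!
Separability of `S` means that `S` is closed in the profinite topology of `G`, whose basic open
sets are the cosets `g N` of finite-index normal subgroups. For a finite-index subgroup `H`, the
profinite topology of `H` is the one induced from `G`, so `S ⊓ H`, which is finitely generated
by Schreier's lemma and hence separable in `H`, is closed in `G`. Finally `S` is a finite union
of left translates of `S ⊓ H`.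
-/

open Subgroup
open scoped Pointwise

/-- Closedness in the profinite topology, phrased through the basic open neighbourhoods `g N`. -/
def IsProfinitelyClosed {G : Type*} [Group G] (A : Set G) : Prop :=
  ∀ g ∉ A, ∃ N : Subgroup G, N.Normal ∧ N.FiniteIndex ∧ ∀ n ∈ N, g * n ∉ A

theorem isSeparableSubgroup_iff_isProfinitelyClosed {G : Type} [Group G] {S : Subgroup G} :
    IsSeparableSubgroup S ↔ IsProfinitelyClosed (S : Set G) := by
  refine forall₂_congr fun g _ => ⟨?_, ?_⟩
  · rintro ⟨Q, _, _, φ, hφ⟩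
    exact ⟨φ.ker, inferInstance, inferInstance, fun n hn hgn =>
      hφ ⟨g * n, hgn, by rw [map_mul, MonoidHom.mem_ker.mp hn, mul_one]⟩⟩
  · rintro ⟨N, _, _, hN⟩
    refine ⟨G ⧸ N, inferInstance, inferInstance, QuotientGroup.mk' N, ?_⟩
    rintro ⟨s, hs, hgs⟩
    have hgs : g⁻¹ * s ∈ N := QuotientGroup.eq.mp hgs.symm
    exact hN _ hgs (by rwa [mul_inv_cancel_left])

namespace IsProfinitelyClosed

variable {G : Type*} [Group G]

theorem smul {A : Set G} (hA : IsProfinitelyClosed A) (s : G) : IsProfinitelyClosed (s • A) := by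
  intro g hg
  rw [Set.mem_smul_set_iff_inv_smul_mem] at hg
  obtain ⟨N, hNn, hNfi, hN⟩ := hA _ hg
  refine ⟨N, hNn, hNfi, fun n hn hgn => hN n hn ?_⟩
  rwa [Set.mem_smul_set_iff_inv_smul_mem, smul_eq_mul, ← mul_assoc] at hgn

theorem iUnion {ι : Type*} [Finite ι] {A : ι → Set G} (hA : ∀ i, IsProfinitelyClosed (A i)) :
    IsProfinitelyClosed (⋃ i, A i) := by
  intro g hg
  simp only [Set.mem_iUnion, not_exists] at hg
  choose N hNn hNfi hN using fun i => hA i g (hg i)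
  refine ⟨⨅ i, N i, normal_iInf_normal hNn, finiteIndex_iInf hNfi, fun n hn => ?_⟩
  simp only [Set.mem_iUnion, not_exists]
  exact fun i => hN i n (mem_iInf.mp hn i)

theorem image_subtype {H : Subgroup G} [H.FiniteIndex] {A : Set H}
    (hA : IsProfinitelyClosed A) : IsProfinitelyClosed (((↑) : H → G) '' A) := by
  intro g hg
  by_cases hgH : g ∈ H
  · obtain ⟨M, _, hMfi, hM⟩ := hA ⟨g, hgH⟩ fun h => hg ⟨_, h, rfl⟩
    have : (M.map H.subtype).FiniteIndex :=
      ⟨by rw [index_map_subtype]; exact mul_ne_zero hMfi.index_ne_zero FiniteIndex.index_ne_zero⟩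
    refine ⟨(M.map H.subtype).normalCore, inferInstance, inferInstance, ?_⟩
    rintro n hn ⟨a, ha, hag⟩
    obtain ⟨m, hm, rfl⟩ := normalCore_le _ hn
    obtain rfl : a = ⟨g, hgH⟩ * m := Subtype.ext hag
    exact hM m hm ha
  · refine ⟨H.normalCore, inferInstance, inferInstance, ?_⟩
    rintro n hn ⟨a, -, hag⟩
    apply hgH
    rw [eq_mul_inv_of_mul_eq hag.symm]
    exact H.mul_mem a.2 (H.inv_mem (normalCore_le H hn))

end IsProfinitelyClosed

namespace Subgroup

variable {G : Type*} [Group G]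

theorem fg_subgroupOf_iff {K H : Subgroup G} (h : K ≤ H) : (K.subgroupOf H).FG ↔ K.FG := by
  rw [← Group.fg_iff_subgroup_fg, ← Group.fg_iff_subgroup_fg]
  let e := subgroupOfEquivOfLe h
  exact ⟨fun _ => Group.fg_of_surjective (f := e.toMonoidHom) e.surjective,
    fun _ => Group.fg_of_surjective (f := e.symm.toMonoidHom) e.symm.surjective⟩

theorem FG.inf_of_finiteIndex {S : Subgroup G} (hS : S.FG) (H : Subgroup G) [H.FiniteIndex] :
    (S ⊓ H).FG := by
  have : Group.FG S := (Group.fg_iff_subgroup_fg S).mpr hS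
  rw [← fg_subgroupOf_iff inf_le_left, inf_subgroupOf_left, ← Group.fg_iff_subgroup_fg]
  exact fg_of_index_ne_zero _

theorem coe_eq_iUnion_smul_inf (S H : Subgroup G) :
    (S : Set G) = ⋃ q : S ⧸ H.subgroupOf S, ((q.out : S) : G) • ((S ⊓ H : Subgroup G) : Set G) := by
  ext g
  simp only [Set.mem_iUnion, Set.mem_smul_set_iff_inv_smul_mem, smul_eq_mul, SetLike.mem_coe,
    mem_inf]
  constructor
  · intro hg
    obtain ⟨h, hq⟩ := QuotientGroup.mk_out_eq_mul (H.subgroupOf S) ⟨g, hg⟩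
    refine ⟨QuotientGroup.mk ⟨g, hg⟩, ?_⟩
    rw [hq]
    simp only [coe_mul, mul_inv_rev, inv_mul_cancel_right]
    exact ⟨S.inv_mem (h : S).2, H.inv_mem (mem_subgroupOf.mp h.2)⟩
  · rintro ⟨q, hS, -⟩
    simpa using S.mul_mem (q.out : S).2 hS

end Subgroup

/-- If a group `G` has a finite-index subgroup `H` which is LERF, then `G` is LERF. -/
theorem lerf_of_finiteIndex_lerf
    {G : Type} [Group G] (H : Subgroup G) (hH : H.FiniteIndex)
    (hLERF : IsLERF ↥H) : IsLERF G := by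
  intro S hS
  have hT : ((S ⊓ H).subgroupOf H).FG :=
    (fg_subgroupOf_iff inf_le_right).mpr (hS.inf_of_finiteIndex H)
  have hT_closed := isSeparableSubgroup_iff_isProfinitelyClosed.mp (hLERF _ hT)
  rw [isSeparableSubgroup_iff_isProfinitelyClosed, coe_eq_iUnion_smul_inf S H]
  have : Finite (S ⧸ H.subgroupOf S) := finite_quotient_of_finiteIndex
  refine IsProfinitelyClosed.iUnion fun q => IsProfinitelyClosed.smul ?_ _
  rw [← map_subgroupOf_eq_of_le inf_le_right, coe_map]
  exact hT_closed.image_subtype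
end

section
/- Let π be a torsion-free group and let π' be a characteristic finite-index subgroup of π. If π' is weakly characteristically potent, then π is weakly characteristically potent. -/
/-- A monoid is torsion-free if no non-identity element has finite order
(the removed Mathlib definition `Monoid.IsTorsionFree`, restated with its old meaning). -/
def Monoid.IsTorsionFree (G : Type*) [Monoid G] : Prop :=
  ∀ g : G, g ≠ 1 → ¬IsOfFinOrder g

/-- A group `π` is weakly characteristically potent if for every `g ≠ 1` there is an
integer `r ≥ 1` such that for every `n ≥ 1` there is a characteristic finite-index
subgroup `π'` of `π` such that the image of `g` in `π/π'` has order exactly `r·n`. -/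
def WeaklyCharacteristicallyPotent (π : Type) [Group π] : Prop :=
  ∀ g : π, g ≠ 1 → ∃ r : ℕ, 0 < r ∧ ∀ n : ℕ, 0 < n →
    ∃ (π' : Subgroup π) (_ : π'.Characteristic), π'.FiniteIndex ∧
      orderOf ((QuotientGroup.mk' π') g) = r * n

/-!
Let `k` be the order of `g` in the finite group `π ⧸ π'`. Then `g ^ k ∈ π'`, and `g ^ k ≠ 1` as
`π` is torsion-free, so the potency of `π'` yields `r` and, for each `n`, a characteristic
finite-index `H ≤ π'` in which `g ^ k` has order `r * n`. Viewed inside `π`, `H` is again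
characteristic of finite index, and the order of `g` modulo `H` is `k * (r * n)`: it is a multiple
of `k`, and its `k`-th power `g ^ k` has order `r * n` there because `π' ⧸ H` embeds in `π ⧸ H`.
-/

theorem orderOf_eq_mul_orderOf_pow_of_dvd {G : Type*} [Group G] {x : G} {k : ℕ}
    (hk : k ∣ orderOf x) : orderOf x = k * orderOf (x ^ k) := by
  rcases eq_or_ne k 0 with rfl | hk0
  · simpa using hk
  · rw [orderOf_pow_of_dvd hk0 hk, Nat.mul_div_cancel' hk]

namespace QuotientGroup

variable {G : Type*} [Group G]

theorem orderOf_mk_dvd_orderOf_mk_of_le {N K : Subgroup G} [N.Normal] [K.Normal] (hNK : N ≤ K)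
    (g : G) : orderOf (mk' K g) ∣ orderOf (mk' N g) :=
  orderOf_map_dvd (map N K (MonoidHom.id G) hNK) (mk' N g)

theorem orderOf_mk_map_subtype {K : Subgroup G} (H : Subgroup K) [H.Normal]
    [(H.map K.subtype).Normal] (x : K) :
    orderOf (mk' (H.map K.subtype) (x : G)) = orderOf (mk' H x) := by
  refine orderOf_eq_orderOf_iff.mpr fun m => ?_
  rw [← map_pow, ← map_pow, mk'_apply, mk'_apply, eq_one_iff, eq_one_iff, ← Subgroup.coe_pow]
  exact Subgroup.mem_map_iff_mem (K := H) (x := x ^ m) K.subtype_injective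

end QuotientGroup

/-- If a torsion-free group `π` has a characteristic finite-index subgroup `π'` which is
weakly characteristically potent, then `π` is weakly characteristically potent. -/
theorem wcp_of_characteristic_finiteIndex_wcp
    {π : Type} [Group π] (htf : Monoid.IsTorsionFree π)
    (π' : Subgroup π) (hchar : π'.Characteristic) (hfi : π'.FiniteIndex)
    (hwcp : WeaklyCharacteristicallyPotent ↥π') :
    WeaklyCharacteristicallyPotent π := by
  intro g hg
  set k := orderOf (QuotientGroup.mk' π' g)
  have hk : 0 < k := orderOf_pos _
  have hgk : g ^ k ∈ π' :=
    (QuotientGroup.eq_one_iff _).mp (pow_orderOf_eq_one (QuotientGroup.mk' π' g))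
  have hgk_ne_one : (⟨g ^ k, hgk⟩ : π') ≠ 1 := fun h =>
    htf g hg (isOfFinOrder_iff_pow_eq_one.mpr ⟨k, hk, congrArg Subtype.val h⟩)
  obtain ⟨r, hr, hpot⟩ := hwcp _ hgk_ne_one
  refine ⟨k * r, Nat.mul_pos hk hr, fun n hn => ?_⟩
  obtain ⟨H, hHchar, hHfi, hHord⟩ := hpot n hn
  refine ⟨H.map π'.subtype, inferInstance, ⟨?_⟩, ?_⟩
  · rw [Subgroup.index_map_subtype]
    exact Nat.mul_ne_zero hHfi.index_ne_zero hfi.index_ne_zero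
  · have hdvd : k ∣ orderOf (QuotientGroup.mk' (H.map π'.subtype) g) :=
      QuotientGroup.orderOf_mk_dvd_orderOf_mk_of_le (Subgroup.map_subtype_le H) g
    rw [orderOf_eq_mul_orderOf_pow_of_dvd hdvd, ← map_pow, mul_assoc, ← hHord]
    exact congrArg (k * ·) (QuotientGroup.orderOf_mk_map_subtype H ⟨g ^ k, hgk⟩)
end

section
/- Let π be a finitely generated RFRS group and let g ∈ π with g ≠ 1. Then the cyclic subgroup ⟨g⟩ generated by g is a virtual retract of π: there exist a finite-index subgroup H of π with g ∈ H and a homomorphism ρ : H → ⟨g⟩ such that ρ(x) = x for every x ∈ ⟨g⟩. -/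
/-!
Walk down the RFRS chain to the last term `πᵢ` that still contains `g`. Since `g ∉ πᵢ₊₁`, the
image of `g` in the abelianization of `πᵢ` has infinite order, and as `πᵢ` is finitely generated
(it has finite index in `π`) some homomorphism `φ : πᵢ → ℤ` has `φ g = d ≠ 0`. On the
finite-index subgroup `φ⁻¹(dℤ)` the map `x ↦ g ^ (φ x / d)` is a retraction onto `⟨g⟩`.
-/

/-- A group `π` is RFRS (residually finite rationally solvable) if there is a descending
chain `π = π₀ ⊇ π₁ ⊇ ⋯` of normal finite-index subgroups with trivial intersection such
that for every `i`, every element of `πᵢ` whose image in the abelianization of `πᵢ` has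
finite order lies in `πᵢ₊₁`. -/
def IsRFRS (π : Type) [Group π] : Prop :=
  ∃ c : ℕ → Subgroup π,
    c 0 = ⊤ ∧ (∀ i, c (i + 1) ≤ c i) ∧ (∀ i, (c i).Normal) ∧ (∀ i, (c i).FiniteIndex) ∧
    (⨅ i, c i) = ⊥ ∧
    ∀ (i : ℕ) (x : ↥(c i)), IsOfFinOrder (Abelianization.of x) → (x : π) ∈ c (i + 1)

open Subgroup

def Subgroup.IsVirtualRetract {G : Type*} [Group G] (K : Subgroup G) : Prop :=
  ∃ H : Subgroup G, H.FiniteIndex ∧ ∃ hle : K ≤ H,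
    ∃ ρ : H →* G, (∀ x : H, ρ x ∈ K) ∧ ∀ (x : G) (hx : x ∈ K), ρ ⟨x, hle hx⟩ = x

theorem Subgroup.finiteIndex_comap {G G' : Type*} [Group G] [Group G'] (f : G →* G')
    (K : Subgroup G') [K.FiniteIndex] : (K.comap f).FiniteIndex :=
  ⟨by rw [index_comap]; exact FiniteIndex.index_ne_zero⟩

theorem Int.finiteIndex_toSubgroup_zmultiples {d : ℤ} (hd : d ≠ 0) :
    (AddSubgroup.zmultiples d).toSubgroup.FiniteIndex :=
  ⟨by simpa [AddSubgroup.index_toSubgroup, Int.index_zmultiples] using hd⟩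

instance Abelianization.fg {G : Type*} [Group G] [Group.FG G] : Group.FG (Abelianization G) :=
  Group.fg_of_surjective (QuotientGroup.mk'_surjective _)

theorem AddCommGroup.exists_addMonoidHom_int_ne_zero {A : Type*} [AddCommGroup A]
    [AddGroup.FG A] {a : A} (ha : ¬IsOfFinAddOrder a) : ∃ f : A →+ ℤ, f a ≠ 0 := by
  have hne : (a : A ⧸ torsion A) ≠ 0 := by
    rwa [Ne, QuotientAddGroup.eq_zero_iff, mem_torsion]
  -- `A ⧸ torsion A` is a finitely generated torsion-free, hence free, `ℤ`-module
  have : Module.Finite ℤ (A ⧸ torsion A) := Module.Finite.iff_addGroup_fg.2 inferInstance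
  obtain ⟨φ, hφ⟩ := Module.Projective.exists_dual_ne_zero ℤ hne
  exact ⟨φ.toAddMonoidHom.comp (QuotientAddGroup.mk' _), hφ⟩

theorem CommGroup.exists_monoidHom_int_ne_one {A : Type*} [CommGroup A] [Group.FG A]
    {a : A} (ha : ¬IsOfFinOrder a) : ∃ f : A →* Multiplicative ℤ, f a ≠ 1 := by
  obtain ⟨f, hf⟩ := AddCommGroup.exists_addMonoidHom_int_ne_zero (a := Additive.ofMul a)
    (by rwa [isOfFinAddOrder_ofMul_iff])
  exact ⟨AddMonoidHom.toMultiplicativeRight f, hf⟩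

theorem Subgroup.zpowers_isVirtualRetract_of_monoidHom_int {G : Type*} [Group G] {g : G}
    (f : G →* Multiplicative ℤ) (hf : f g ≠ 1) : (zpowers g).IsVirtualRetract := by
  set d := (f g).toAdd
  have hd : d ≠ 0 := hf
  have := Int.finiteIndex_toSubgroup_zmultiples hd
  set H := (AddSubgroup.zmultiples d).toSubgroup.comap f
  have mem_H {x : G} : x ∈ H ↔ d ∣ (f x).toAdd := by
    simp only [H, mem_comap, Multiplicative.mem_toSubgroup, Int.mem_zmultiples_iff]
  let ρ : H →* G :=
    { toFun := fun x => g ^ ((f x).toAdd / d)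
      map_one' := by simp
      map_mul' := fun x y => by
        simp only [coe_mul, map_mul, toAdd_mul, Int.add_ediv_of_dvd_left (mem_H.1 x.2),
          zpow_add] }
  refine ⟨H, finiteIndex_comap f _, zpowers_le.2 (mem_H.2 dvd_rfl), ρ, fun x => ⟨_, rfl⟩, ?_⟩
  rintro _ ⟨k, rfl⟩
  change g ^ ((f (g ^ k)).toAdd / d) = g ^ k
  rw [map_zpow, toAdd_zpow, smul_eq_mul, Int.mul_ediv_cancel _ hd]

theorem Subgroup.IsVirtualRetract.map_subtype {G : Type*} [Group G] {N : Subgroup G}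
    [N.FiniteIndex] {K : Subgroup N} (hK : K.IsVirtualRetract) :
    (K.map N.subtype).IsVirtualRetract := by
  obtain ⟨H, hH, hle, ρ, hρK, hρ⟩ := hK
  let e : H ≃* H.map N.subtype := H.equivMapOfInjective N.subtype N.subtype_injective
  refine ⟨H.map N.subtype, ⟨?_⟩, map_mono hle, N.subtype.comp (ρ.comp e.symm.toMonoidHom),
    fun x => mem_map_of_mem _ (hρK _), ?_⟩
  · rw [index_map_subtype]
    exact mul_ne_zero hH.index_ne_zero FiniteIndex.index_ne_zero
  · rintro _ ⟨y, hy, rfl⟩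
    have : e.symm ⟨N.subtype y, map_mono hle ⟨y, hy, rfl⟩⟩ = ⟨y, hle hy⟩ :=
      e.symm_apply_eq.2 rfl
    exact congrArg Subtype.val ((congrArg ρ this).trans (hρ y hy))

theorem Subgroup.exists_mem_notMem_succ_of_iInf_eq_bot {G : Type*} [Group G]
    {c : ℕ → Subgroup G} (hc0 : c 0 = ⊤) (hinf : ⨅ i, c i = ⊥) {g : G} (hg : g ≠ 1) :
    ∃ i, g ∈ c i ∧ g ∉ c (i + 1) := by
  classical
  have hex : ∃ j, g ∉ c j := by
    by_contra! h
    exact hg (by simpa [hinf] using mem_iInf.2 h)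
  obtain ⟨i, hi⟩ := Nat.exists_eq_add_one_of_ne_zero (n := Nat.find hex) fun h0 => by
    simpa [h0, hc0] using Nat.find_spec hex
  exact ⟨i, not_not.1 (Nat.find_min hex (by omega)), hi ▸ Nat.find_spec hex⟩

theorem IsRFRS.exists_finiteIndex_not_isOfFinOrder {π : Type} [Group π] (hrfrs : IsRFRS π)
    {g : π} (hg : g ≠ 1) : ∃ N : Subgroup π, N.FiniteIndex ∧ ∃ hgN : g ∈ N,
      ¬IsOfFinOrder (Abelianization.of (⟨g, hgN⟩ : N)) := by
  obtain ⟨c, hc0, -, -, hfin, hinf, hstep⟩ := hrfrs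
  obtain ⟨i, hgi, hgi'⟩ := exists_mem_notMem_succ_of_iInf_eq_bot hc0 hinf hg
  exact ⟨c i, hfin i, hgi, fun h => hgi' (hstep i ⟨g, hgi⟩ h)⟩

/-- If `π` is a finitely generated RFRS group and `g ≠ 1`, then the cyclic subgroup `⟨g⟩`
is a virtual retract of `π`: there are a finite-index subgroup `H` of `π` containing `g`
(equivalently, containing `⟨g⟩`) and a homomorphism `ρ : H → ⟨g⟩` restricting to the
identity on `⟨g⟩`. -/
theorem rfrs_cyclic_subgroup_virtual_retract
    {π : Type} [Group π] [Group.FG π] (hrfrs : IsRFRS π)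
    (g : π) (hg : g ≠ 1) :
    ∃ H : Subgroup π, H.FiniteIndex ∧ ∃ hle : Subgroup.zpowers g ≤ H,
      ∃ ρ : ↥H →* π, (∀ x : ↥H, ρ x ∈ Subgroup.zpowers g) ∧
        ∀ (x : π) (hx : x ∈ Subgroup.zpowers g), ρ ⟨x, hle hx⟩ = x := by
  obtain ⟨N, hN, hgN, hinf⟩ := hrfrs.exists_finiteIndex_not_isOfFinOrder hg
  have : Group.FG N := fg_of_index_ne_zero N
  obtain ⟨f, hf⟩ := CommGroup.exists_monoidHom_int_ne_one hinf
  have hK := (zpowers_isVirtualRetract_of_monoidHom_int (f.comp Abelianization.of) hf).map_subtype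
  rwa [MonoidHom.map_zpowers] at hK
end

section
/- Let G be a group and let H be a virtual retract of G, i.e., there exist a finite-index subgroup K of G with H ≤ K and a homomorphism ρ : K → H such that ρ(h) = h for all h ∈ H. Then G induces the full profinite topology on H: for every finite-index subgroup H' of H there exists a finite-index subgroup G' of G such that G' ∩ H ≤ H'. -/
/-- If `H` is a virtual retract of `G` (there are a finite-index subgroup `K` of `G`
containing `H` and a homomorphism `ρ : K → H` restricting to the identity on `H`), then
`G` induces the full profinite topology on `H`: for every finite-index subgroup `H'` of
`H` there is a finite-index subgroup `G'` of `G` with `G' ∩ H ≤ H'`. -/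
theorem virtual_retract_induces_full_profinite_topology
    {G : Type} [Group G]
    (H K : Subgroup G) (hHK : H ≤ K) (hK : K.FiniteIndex)
    (ρ : ↥K →* G) (hρmem : ∀ k : ↥K, ρ k ∈ H)
    (hρfix : ∀ (h : G) (hh : h ∈ H), ρ ⟨h, hHK hh⟩ = h) :
    ∀ H' : Subgroup ↥H, H'.FiniteIndex →
      ∃ G' : Subgroup G, G'.FiniteIndex ∧
        ∀ (x : G) (hx : x ∈ H), x ∈ G' → (⟨x, hx⟩ : ↥H) ∈ H' := by
  intro H' hH'
  -- the retraction as a hom into ↥H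
  let ρ' : ↥K →* ↥H := ρ.codRestrict H hρmem
  have hρ'surj : Function.Surjective ρ' := by
    intro h
    refine ⟨⟨(h : G), hHK h.2⟩, ?_⟩
    apply Subtype.ext
    exact hρfix h h.2
  -- preimage of H' in K
  let L : Subgroup ↥K := H'.comap ρ'
  have hL : L.FiniteIndex := by
    constructor
    rw [Subgroup.index_comap_of_surjective H' hρ'surj]
    exact hH'.index_ne_zero
  refine ⟨L.map K.subtype, ?_, ?_⟩
  · constructor
    rw [Subgroup.index_map_subtype]
    exact Nat.mul_ne_zero hL.index_ne_zero hK.index_ne_zero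
  · intro x hx hxG'
    rcases hxG' with ⟨y, hy, hxy⟩
    have hyx : y = ⟨x, hHK hx⟩ := by
      apply Subtype.ext
      exact hxy
    have : ρ' ⟨x, hHK hx⟩ ∈ H' := by rw [← hyx]; exact hy
    have heq : ρ' ⟨x, hHK hx⟩ = ⟨x, hx⟩ := Subtype.ext (hρfix x hx)
    rwa [heq] at this
end

section
/- Let K be a finitely generated group, let Φ be an automorphism of K, and let G = K ⋊_Φ ℤ be the semidirect product in which the generator 1 ∈ ℤ acts on K by Φ; identify K with the subgroup K × {0} of G. Then for every finite-index subgroup Γ of K there exists a finite-index subgroup G' of G such that G' ∩ K = Γ. In particular, G induces the full profinite topology on K. -/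
/-!
The semidirect product `N ⋊[φ] G` acts on `N` by affine maps `n ↦ x.left * φ x.right n`, hence on
subsets of `N`. For a subgroup `Γ ≤ N`, the translate `x • Γ` is a left coset of the subgroup
`φ x.right (Γ)`, which has the same index as `Γ`. A finitely generated group has only finitely
many subgroups of a given finite index (each is a point stabilizer of one of the finitely many
actions on `Fin d`), so the orbit of `Γ` is finite and its stabilizer has finite index. An element
`inl k` stabilizes `Γ` exactly when `k • Γ = Γ`, that is when `k ∈ Γ`.
-/

open Pointwise

theorem MonoidHom.finite_of_fg {G M : Type*} [Group G] [Group.FG G] [Monoid M] [Finite M] :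
    Finite (G →* M) := by
  obtain ⟨S, hS⟩ := Group.fg_def.mp ‹Group.FG G›
  exact Finite.of_injective (fun f : G →* M => fun s : S => f s) fun f g hfg =>
    MonoidHom.eq_of_eqOn_dense hS fun s hs => congrFun hfg ⟨s, hs⟩

theorem Subgroup.finite_setOf_index_eq {G : Type*} [Group G] [Group.FG G] {d : ℕ} (hd : d ≠ 0) :
    {H : Subgroup G | H.index = d}.Finite := by
  have := MonoidHom.finite_of_fg (G := G) (M := Equiv.Perm (Fin d))
  refine (Set.finite_range fun p : (G →* Equiv.Perm (Fin d)) × Fin d =>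
    (MulAction.stabilizer (Equiv.Perm (Fin d)) p.2).comap p.1).subset ?_
  intro H hH
  have : H.FiniteIndex := ⟨by rw [hH]; exact hd⟩
  obtain ⟨e⟩ : Nonempty ((G ⧸ H) ≃ Fin d) :=
    ⟨Finite.equivFinOfCardEq (by rw [← Subgroup.index_eq_card, hH])⟩
  refine ⟨(e.permCongrHom.toMonoidHom.comp (MulAction.toPermHom G (G ⧸ H)), e ↑(1 : G)), ?_⟩
  ext g
  simp [Equiv.permCongr_apply, MulAction.mem_stabilizer_iff, QuotientGroup.eq]

theorem Subgroup.finite_range_smul_coe {G : Type*} [Group G] (H : Subgroup G) [H.FiniteIndex] :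
    (Set.range fun a : G => a • (H : Set G)).Finite := by
  refine (Set.finite_range fun q : G ⧸ H => QuotientGroup.mk ⁻¹' {q}).subset ?_
  rintro _ ⟨a, rfl⟩
  refine ⟨a, ?_⟩
  ext g
  rw [Set.mem_preimage, Set.mem_singleton_iff, eq_comm, QuotientGroup.eq, mem_leftCoset_iff,
    SetLike.mem_coe]

namespace SemidirectProduct

variable {N G : Type*} [Group N] [Group G] {φ : G →* MulAut N}

instance mulActionLeft : MulAction (N ⋊[φ] G) N where
  smul x n := x.left * φ x.right n
  one_smul n := by change 1 * φ 1 n = n; simp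
  mul_smul a b n := by
    change a.left * φ a.right b.left * φ (a.right * b.right) n =
      a.left * φ a.right (b.left * φ b.right n)
    simp [mul_assoc]

theorem smul_def (x : N ⋊[φ] G) (n : N) : x • n = x.left * φ x.right n := rfl

theorem smul_coe_subgroup (x : N ⋊[φ] G) (H : Subgroup N) :
    x • (H : Set N) = x.left • (H.map (φ x.right).toMonoidHom : Set N) := by
  simp only [← Set.image_smul, Subgroup.coe_map, Set.image_image, smul_def, smul_eq_mul,
    MulEquiv.coe_toMonoidHom]

theorem inl_smul_coe_subgroup (k : N) (H : Subgroup N) :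
    (inl k : N ⋊[φ] G) • (H : Set N) = k • (H : Set N) := by
  ext n
  simp [← Set.image_smul, smul_def]

theorem orbit_coe_subgroup_subset (H : Subgroup N) :
    MulAction.orbit (N ⋊[φ] G) (H : Set N) ⊆
      ⋃ H' ∈ {H' : Subgroup N | H'.index = H.index}, Set.range fun a : N => a • (H' : Set N) := by
  rintro _ ⟨x, rfl⟩
  exact Set.mem_biUnion (Subgroup.index_map_equiv H (φ x.right))
    ⟨x.left, (smul_coe_subgroup x H).symm⟩

theorem exists_finiteIndex_comap_inl_eq [Group.FG N] (H : Subgroup N) [H.FiniteIndex] :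
    ∃ G' : Subgroup (N ⋊[φ] G), G'.FiniteIndex ∧ G'.comap inl = H := by
  have hH : H.index ≠ 0 := Subgroup.FiniteIndex.index_ne_zero
  have hfin : (MulAction.orbit (N ⋊[φ] G) (H : Set N)).Finite :=
    ((Subgroup.finite_setOf_index_eq hH).biUnion fun H' hH' =>
      haveI : H'.FiniteIndex := ⟨hH' ▸ hH⟩
      H'.finite_range_smul_coe).subset (orbit_coe_subgroup_subset H)
  refine ⟨MulAction.stabilizer (N ⋊[φ] G) (H : Set N), ⟨?_⟩, ?_⟩
  · rw [MulAction.index_stabilizer]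
    exact ((Set.ncard_pos hfin).mpr ⟨_, MulAction.mem_orbit_self _⟩).ne'
  · ext k
    rw [Subgroup.mem_comap, MulAction.mem_stabilizer_iff, inl_smul_coe_subgroup]
    refine ⟨fun hk => ?_, smul_coe_set⟩
    simpa [hk] using Set.smul_mem_smul_set (a := k) H.one_mem

end SemidirectProduct

/-- Let `K` be a finitely generated group, `Φ` an automorphism of `K`, and
`G = K ⋊_Φ ℤ` the semidirect product in which the generator `1 ∈ ℤ` acts on `K` by `Φ`
(so `m ∈ ℤ` acts by `Φ^m`); `K` is identified with the subgroup `K × {0}` of `G` via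
`SemidirectProduct.inl`. Then for every finite-index subgroup `Γ` of `K` there is a
finite-index subgroup `G'` of `G` with `G' ∩ K = Γ`. In particular, `G` induces the
full profinite topology on `K`. -/
theorem semidirect_product_induces_full_profinite_topology_on_kernel
    {K : Type} [Group K] [Group.FG K] (Φ : MulAut K)
    (Γ : Subgroup K) (hΓ : Γ.FiniteIndex) :
    ∃ G' : Subgroup (K ⋊[zpowersHom (MulAut K) Φ] Multiplicative ℤ),
      G'.FiniteIndex ∧ ∀ k : K, SemidirectProduct.inl k ∈ G' ↔ k ∈ Γ := by
  obtain ⟨G', hG', hcomap⟩ :=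
    SemidirectProduct.exists_finiteIndex_comap_inl_eq (φ := zpowersHom (MulAut K) Φ) Γ
  exact ⟨G', hG', fun k => SetLike.ext_iff.mp hcomap k⟩
end

section
/- Let π be a torsion-free group and let Γ be a separable subgroup of π. Suppose that there are only finitely many right cosets Γg with g ∈ π ∖ Γ for which the intersection Γ ∩ g⁻¹Γg is infinite. Then there exists a finite-index subgroup π' of π with Γ ≤ π' such that Γ is malnormal in π', i.e., Γ ∩ g⁻¹Γg = {1} for every g ∈ π' ∖ Γ. -/
/-!
Separability gives, for each of the finitely many cosets `Γ t` (`t ∉ Γ`) on which `Γ ∩ g⁻¹Γg`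
can be infinite, a finite-index subgroup containing `Γ` but not `t`; let `π'` be their
intersection. If `g ∈ π' ∖ Γ` and `1 ≠ x ∈ Γ ∩ g⁻¹Γg`, torsion-freeness makes `⟨x⟩`, hence
`Γ ∩ g⁻¹Γg`, infinite, so `g ∈ Γ t` for one of these `t`; but then `t ∈ Γ g ⊆ π'`.
-/

namespace IsSeparableSubgroup

variable {G : Type} [Group G] {Γ : Subgroup G}

theorem exists_finiteIndex_le_notMem (hsep : IsSeparableSubgroup Γ) {t : G} (ht : t ∉ Γ) :
    ∃ K : Subgroup G, K.FiniteIndex ∧ Γ ≤ K ∧ t ∉ K := by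
  obtain ⟨Q, _, _, φ, hφ⟩ := hsep t ht
  refine ⟨(Γ.map φ).comap φ, ⟨?_⟩, Subgroup.le_comap_map φ Γ, hφ⟩
  rw [Subgroup.index_comap]
  exact Subgroup.FiniteIndex.index_ne_zero

theorem exists_finiteIndex_le_forall_notMem (hsep : IsSeparableSubgroup Γ) (T : Finset G) :
    ∃ K : Subgroup G, K.FiniteIndex ∧ Γ ≤ K ∧ ∀ t ∈ T, t ∉ Γ → t ∉ K := by
  have separate (t : G) : ∃ K : Subgroup G, K.FiniteIndex ∧ Γ ≤ K ∧ (t ∉ Γ → t ∉ K) := by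
    by_cases ht : t ∈ Γ
    · exact ⟨⊤, inferInstance, le_top, absurd ht⟩
    · obtain ⟨K, hK, hΓK, htK⟩ := hsep.exists_finiteIndex_le_notMem ht
      exact ⟨K, hK, hΓK, fun _ => htK⟩
  choose K hKfi hΓK htK using separate
  refine ⟨⨅ t ∈ T, K t, Subgroup.finiteIndex_iInf' _ fun t _ => hKfi t,
    le_iInf₂ fun t _ => hΓK t, fun t hT ht hmem => htK t ht ?_⟩
  exact Subgroup.mem_iInf.1 (Subgroup.mem_iInf.1 hmem t) hT

end IsSeparableSubgroup

theorem Monoid.IsTorsionFree.infinite_of_zpowers_subset {G : Type*} [Group G] (htf : Monoid.IsTorsionFree G)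
    {S : Set G} {x : G} (hx : x ≠ 1) (hS : (Subgroup.zpowers x : Set G) ⊆ S) : S.Infinite :=
  (infinite_zpowers.2 (htf x hx)).mono hS

theorem zpowers_subset_inter_conj {G : Type*} [Group G] {Γ : Subgroup G} {g x : G}
    (hx : x ∈ Γ) (hgx : g * x * g⁻¹ ∈ Γ) :
    (Subgroup.zpowers x : Set G) ⊆ {y | y ∈ Γ ∧ g * y * g⁻¹ ∈ Γ} := by
  rintro _ ⟨n, rfl⟩
  exact ⟨Γ.zpow_mem hx n, conj_zpow (a := g) ▸ Γ.zpow_mem hgx n⟩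

/-- Let `π` be a torsion-free group and `Γ` a separable subgroup.  Suppose that the
elements `g ∈ π ∖ Γ` for which `Γ ∩ g⁻¹Γg` is infinite lie in only finitely many right
cosets `Γ·t` of `Γ`.  Then there is a finite-index subgroup `π'` of `π` containing `Γ`
in which `Γ` is malnormal: `Γ ∩ g⁻¹Γg = {1}` for every `g ∈ π' ∖ Γ`. -/
theorem virtually_malnormal_of_separable_finite_width
    {π : Type} [Group π] (htf : Monoid.IsTorsionFree π)
    (Γ : Subgroup π) (hsep : IsSeparableSubgroup Γ)
    (hfin : ∃ T : Finset π, ∀ g : π, g ∉ Γ →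
      Set.Infinite {x : π | x ∈ Γ ∧ g * x * g⁻¹ ∈ Γ} → ∃ t ∈ T, g * t⁻¹ ∈ Γ) :
    ∃ π' : Subgroup π, π'.FiniteIndex ∧ Γ ≤ π' ∧
      ∀ g ∈ π', g ∉ Γ → ∀ x ∈ Γ, g * x * g⁻¹ ∈ Γ → x = 1 := by
  obtain ⟨T, hT⟩ := hfin
  obtain ⟨K, hKfi, hΓK, hTK⟩ := hsep.exists_finiteIndex_le_forall_notMem T
  refine ⟨K, hKfi, hΓK, fun g hgK hgΓ x hx hgx => ?_⟩
  by_contra hx1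
  obtain ⟨t, htT, hgt⟩ :=
    hT g hgΓ (htf.infinite_of_zpowers_subset hx1 (zpowers_subset_inter_conj hx hgx))
  have htΓ : t ∉ Γ := fun ht => hgΓ (by simpa using Γ.mul_mem hgt ht)
  have htK : t ∈ K := by simpa using K.mul_mem (K.inv_mem (hΓK hgt)) hgK
  exact hTK t htT htΓ htK
end

section
/- Let PSL(2,ℂ) denote the quotient of SL(2,ℂ) by its center {I, −I}. If x ∈ PSL(2,ℂ) is an element of infinite order, then the centralizer of x in PSL(2,ℂ) is abelian. -/
/-!
If the classes of `A` and `X` commute in `PSL(2, R)`, then `A X = r • X A` for a scalar `r`.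
Taking traces after conjugating by `A` gives `tr X = r tr X`, so for `r ≠ 1` the trace of `X`
vanishes, Cayley–Hamilton gives `X² = -1`, and the class of `X` has order at most `2`. Hence, when
the class of `X` has infinite order, every lift of its centralizer commutes with `X` as a matrix.
Such an `X` is not scalar, and the commutant of a non-scalar `2 × 2` matrix is `span {1, X}`,
which is commutative.
-/

open Matrix
open scoped MatrixGroups

namespace Matrix

section FinTwo

variable {R : Type*} [CommRing R]

lemma eq_smul_one_add_smul_of_entries {A X : Matrix (Fin 2) (Fin 2) R} {β : R}
    (h01 : A 0 1 = β * X 0 1) (h10 : A 1 0 = β * X 1 0)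
    (hdiag : A 0 0 - A 1 1 = β * (X 0 0 - X 1 1)) :
    A = (A 1 1 - β * X 1 1) • 1 + β • X := by
  ext i j
  fin_cases i <;> fin_cases j <;> simp
  · linear_combination hdiag
  · exact h01
  · exact h10

lemma mul_self_eq_neg_one_of_trace_eq_zero {X : Matrix (Fin 2) (Fin 2) R} (hdet : X.det = 1)
    (htr : X.trace = 0) : X * X = -1 := by
  rw [det_fin_two] at hdet
  rw [trace_fin_two] at htr
  ext i j
  fin_cases i <;> fin_cases j <;> simp [mul_apply, Fin.sum_univ_two]
  · linear_combination X 0 0 * htr - hdet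
  · linear_combination X 0 1 * htr
  · linear_combination X 1 0 * htr
  · linear_combination X 1 1 * htr - hdet

variable {K : Type*} [Field K]

theorem exists_eq_smul_one_add_smul_of_commute {A X : Matrix (Fin 2) (Fin 2) K}
    (hX : X ∉ Set.range (scalar (Fin 2))) (h : Commute A X) :
    ∃ α β : K, A = α • 1 + β • X := by
  have entry (i j : Fin 2) := congrFun₂ h.eq i j
  simp only [mul_apply, Fin.sum_univ_two] at entry
  have e00 := entry 0 0
  have e01 := entry 0 1
  have e10 := entry 1 0
  have hX' : X 0 1 ≠ 0 ∨ X 1 0 ≠ 0 ∨ X 0 0 - X 1 1 ≠ 0 := by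
    by_contra! h0
    refine hX ⟨X 1 1, ?_⟩
    ext i j
    fin_cases i <;> fin_cases j <;> simp [h0.1, h0.2.1, sub_eq_zero.1 h0.2.2]
  rcases hX' with h01 | h10 | hdiag
  · refine ⟨_, _, eq_smul_one_add_smul_of_entries (β := A 0 1 / X 0 1) ?_ ?_ ?_⟩
    · field_simp
    · field_simp; linear_combination -e00
    · field_simp; linear_combination e01
  · refine ⟨_, _, eq_smul_one_add_smul_of_entries (β := A 1 0 / X 1 0) ?_ ?_ ?_⟩
    · field_simp; linear_combination e00
    · field_simp
    · field_simp; linear_combination -e10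
  · refine ⟨_, _,
      eq_smul_one_add_smul_of_entries (β := (A 0 0 - A 1 1) / (X 0 0 - X 1 1)) ?_ ?_ ?_⟩
    · field_simp; linear_combination -e01
    · field_simp; linear_combination e10
    · field_simp

theorem commute_of_commute_of_notMem_range_scalar {A B X : Matrix (Fin 2) (Fin 2) K}
    (hX : X ∉ Set.range (scalar (Fin 2))) (hA : Commute A X) (hB : Commute B X) :
    Commute A B := by
  obtain ⟨α, β, rfl⟩ := exists_eq_smul_one_add_smul_of_commute hX hA
  obtain ⟨γ, δ, rfl⟩ := exists_eq_smul_one_add_smul_of_commute hX hB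
  have hspan (α β : K) : Commute (α • 1 + β • X) X :=
    ((Commute.one_left X).smul_left α).add_left ((Commute.refl X).smul_left β)
  exact ((Commute.one_right _).smul_right γ).add_right ((hspan α β).smul_right δ)

end FinTwo

theorem trace_eq_zero_of_mul_eq_smul_mul {n R : Type*} [Fintype n] [DecidableEq n] [CommRing R]
    [IsDomain R] {A X : Matrix n n R} {r : R} (hA : IsUnit A) (h : A * X = r • (X * A))
    (hr : r ≠ 1) : X.trace = 0 := by
  obtain ⟨u, rfl⟩ := hA
  have htr : X.trace = r * X.trace := calc
    X.trace = (u.inv * (u * X)).trace := by rw [← mul_assoc, u.inv_val, one_mul]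
    _ = r * (X * u * u.inv).trace := by
      rw [h, mul_smul_comm, trace_smul, trace_mul_comm, smul_eq_mul, mul_assoc]
    _ = r * X.trace := by rw [mul_assoc, u.val_inv, mul_one]
  have : (1 - r) * X.trace = 0 := by linear_combination htr
  exact (mul_eq_zero.1 this).resolve_left (sub_ne_zero.2 hr.symm)

end Matrix

namespace Matrix.SpecialLinearGroup

variable {n R : Type*} [Fintype n] [DecidableEq n] [CommRing R]

lemma mem_center_of_coe_mem_range_scalar {X : SpecialLinearGroup n R}
    (hX : (X : Matrix n n R) ∈ Set.range (scalar n)) :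
    X ∈ Subgroup.center (SpecialLinearGroup n R) := by
  obtain ⟨r, hr⟩ := hX
  exact mem_center_iff.2 ⟨r, by simpa [← hr] using X.prop, hr⟩

lemma coe_notMem_range_scalar_of_not_isOfFinOrder {X : SpecialLinearGroup n R}
    (hX : ¬IsOfFinOrder (X : ProjectiveSpecialLinearGroup n R)) :
    (X : Matrix n n R) ∉ Set.range (scalar n) := fun hs ↦
  hX <| by
    rw [(QuotientGroup.eq_one_iff X).2 (mem_center_of_coe_mem_range_scalar hs)]
    exact IsOfFinOrder.one

lemma exists_coe_mul_eq_smul_of_commute_mk {A X : SpecialLinearGroup n R}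
    (h : Commute (A : ProjectiveSpecialLinearGroup n R) X) :
    ∃ r : R, (A * X : Matrix n n R) = r • (X * A) := by
  have hmk : ((X * A : SpecialLinearGroup n R) : ProjectiveSpecialLinearGroup n R) = ↑(A * X) := by
    simpa only [QuotientGroup.mk_mul] using h.eq.symm
  obtain ⟨r, -, hr⟩ := mem_center_iff.1 (QuotientGroup.eq.1 hmk)
  refine ⟨r, ?_⟩
  calc (A * X : Matrix n n R)
    _ = ↑((X * A) * ((X * A)⁻¹ * (A * X))) := by rw [mul_inv_cancel_left, coe_mul]
    _ = r • (X * A) := by rw [coe_mul, ← hr, scalar_apply, ← smul_eq_mul_diagonal, coe_mul]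

lemma isOfFinOrder_mk_of_trace_eq_zero {X : SL(2, R)}
    (hX : (X : Matrix (Fin 2) (Fin 2) R).trace = 0) : IsOfFinOrder (X : PSL(2, R)) := by
  refine isOfFinOrder_iff_pow_eq_one.2 ⟨2, two_pos, ?_⟩
  rw [← QuotientGroup.mk_pow, QuotientGroup.eq_one_iff, mem_center_iff]
  refine ⟨-1, by norm_num, ?_⟩
  rw [map_neg, map_one, coe_pow, sq, mul_self_eq_neg_one_of_trace_eq_zero X.prop hX]

lemma commute_coe_of_commute_mk [IsDomain R] {A X : SL(2, R)}
    (hX : ¬IsOfFinOrder (X : PSL(2, R))) (h : Commute (A : PSL(2, R)) X) :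
    Commute (A : Matrix (Fin 2) (Fin 2) R) X := by
  obtain ⟨r, hr⟩ := exists_coe_mul_eq_smul_of_commute_mk h
  by_cases hr1 : r = 1
  · rwa [hr1, one_smul] at hr
  · have hA : IsUnit (A : Matrix (Fin 2) (Fin 2) R) :=
      (isUnit_iff_isUnit_det _).2 (by rw [A.prop]; exact isUnit_one)
    exact absurd (isOfFinOrder_mk_of_trace_eq_zero (trace_eq_zero_of_mul_eq_smul_mul hA hr hr1)) hX

end Matrix.SpecialLinearGroup

open Matrix.SpecialLinearGroup in
/-- In `PSL(2,ℂ)`, the quotient of `SL(2,ℂ)` by its center `{I, -I}`, the centralizer of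
any element of infinite order is abelian. -/
theorem psl2C_centralizer_of_infinite_order_abelian
    (x : Matrix.SpecialLinearGroup (Fin 2) ℂ ⧸
      Subgroup.center (Matrix.SpecialLinearGroup (Fin 2) ℂ))
    (hx : ¬ IsOfFinOrder x) :
    ∀ a ∈ Subgroup.centralizer {x}, ∀ b ∈ Subgroup.centralizer {x}, a * b = b * a := by
  obtain ⟨X, rfl⟩ := QuotientGroup.mk_surjective x
  intro a ha b hb
  obtain ⟨A, rfl⟩ := QuotientGroup.mk_surjective a
  obtain ⟨B, rfl⟩ := QuotientGroup.mk_surjective b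
  have hmat : Commute (A : Matrix (Fin 2) (Fin 2) ℂ) B :=
    commute_of_commute_of_notMem_range_scalar (coe_notMem_range_scalar_of_not_isOfFinOrder hx)
      (commute_coe_of_commute_mk hx (Subgroup.mem_centralizer_singleton_iff.1 ha))
      (commute_coe_of_commute_mk hx (Subgroup.mem_centralizer_singleton_iff.1 hb))
  have hAB : Commute A B := Subtype.ext (by simpa only [coe_mul] using hmat.eq)
  exact (hAB.map (QuotientGroup.mk' _)).eq
end
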